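/- arXiv:1411.4987 — 2 statements merged into one kernel-verified Lean document; each statement's English description precedes it below -/
import Mathlib

section
/- Semisimple Riesz MV-algebras have the amalgamation property: if Z, A, B are semisimple Riesz MV-algebras and z_A : Z → A, z_B : Z → B are injective Riesz MV-algebra homomorphisms, then there exist a semisimple Riesz MV-algebra E and injective Riesz MV-algebra homomorphisms f_A : A → E and f_B : B → E with f_A ∘ z_A = f_B ∘ z_B. -/
universe u v w

/-- An MV-algebra structure on the type `A`. -/
structure MVAlg (A : Type u) where
  oplus : A → A → A
  star : A → A
  zero : A
  oplus_comm : ∀ x y, oplus x y = oplus y x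
  oplus_assoc : ∀ x y z, oplus (oplus x y) z = oplus x (oplus y z)
  oplus_zero : ∀ x, oplus x zero = x
  star_star : ∀ x, star (star x) = x
  oplus_one : ∀ x, oplus x (star zero) = star zero
  luk : ∀ x y, oplus (star (oplus (star x) y)) y = oplus (star (oplus (star y) x)) x

namespace MVAlg

variable {A : Type u}

/-- The top element `1 := 0*`. -/
def one (M : MVAlg A) : A := M.star M.zero

/-- The underlying order: `x ≤ y` iff `x* ⊕ y = 1`. -/
def le (M : MVAlg A) (x y : A) : Prop := M.oplus (M.star x) y = M.one

/-- An ideal: contains `0`, closed under `⊕` and downward closed. -/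
def IsIdeal (M : MVAlg A) (I : Set A) : Prop :=
  M.zero ∈ I ∧ (∀ x ∈ I, ∀ y ∈ I, M.oplus x y ∈ I) ∧ (∀ x y, M.le x y → y ∈ I → x ∈ I)

/-- A maximal proper ideal. -/
def IsMaximalIdeal (M : MVAlg A) (I : Set A) : Prop :=
  M.IsIdeal I ∧ I ≠ Set.univ ∧ ∀ J, M.IsIdeal J → J ≠ Set.univ → I ⊆ J → J = I

/-- Semisimplicity: the intersection of all maximal proper ideals is `{0}`. -/
def Semisimple (M : MVAlg A) : Prop :=
  {x | ∀ I, M.IsMaximalIdeal I → x ∈ I} = {M.zero}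

end MVAlg

/-- Homomorphisms of MV-algebras preserve `⊕`, `*` and `0`. -/
def MVHom {A : Type u} {B : Type v} (M : MVAlg A) (N : MVAlg B) (f : A → B) : Prop :=
  (∀ x y, f (M.oplus x y) = N.oplus (f x) (f y)) ∧
  (∀ x, f (M.star x) = N.star (f x)) ∧ f M.zero = N.zero

/-- A unital commutative PMV-algebra. -/
structure PMVAlg (A : Type u) extends MVAlg A where
  mul : A → A → A
  mul_assoc : ∀ x y z, mul (mul x y) z = mul x (mul y z)
  mul_comm : ∀ x y, mul x y = mul y x
  mul_one : ∀ x, mul x toMVAlg.one = x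
  mul_linear_right : ∀ x y z, toMVAlg.le y (toMVAlg.star z) →
    mul x (toMVAlg.oplus y z) = toMVAlg.oplus (mul x y) (mul x z)
  mul_linear_left : ∀ x y z, toMVAlg.le x (toMVAlg.star y) →
    mul (toMVAlg.oplus x y) z = toMVAlg.oplus (mul x z) (mul y z)

/-- Semisimplicity of a PMV-algebra is semisimplicity of its MV-reduct. -/
def PMVAlg.Semisimple {A : Type u} (P : PMVAlg A) : Prop := P.toMVAlg.Semisimple

/-- Homomorphisms of PMV-algebras. -/
def PMVHom {A : Type u} {B : Type v} (P : PMVAlg A) (Q : PMVAlg B) (f : A → B) : Prop :=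
  MVHom P.toMVAlg Q.toMVAlg f ∧ ∀ x y, f (P.mul x y) = Q.mul (f x) (f y)

/-- A Riesz MV-algebra: an MV-algebra with a scalar multiplication by elements of `[0,1]`. -/
structure RieszMVAlg (A : Type u) extends MVAlg A where
  smul : ℝ → A → A
  smul_oplus : ∀ α : ℝ, α ∈ Set.Icc (0:ℝ) 1 → ∀ x y, toMVAlg.le x (toMVAlg.star y) →
    smul α (toMVAlg.oplus x y) = toMVAlg.oplus (smul α x) (smul α y)
  add_smul : ∀ α β : ℝ, α ∈ Set.Icc (0:ℝ) 1 → β ∈ Set.Icc (0:ℝ) 1 → α + β ≤ 1 → ∀ x,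
    smul (α + β) x = toMVAlg.oplus (smul α x) (smul β x) ∧
    toMVAlg.le (smul α x) (toMVAlg.star (smul β x))
  mul_smul : ∀ α β : ℝ, α ∈ Set.Icc (0:ℝ) 1 → β ∈ Set.Icc (0:ℝ) 1 → ∀ x,
    smul (α * β) x = smul α (smul β x)
  one_smul : ∀ x, smul 1 x = x

/-- Semisimplicity of a Riesz MV-algebra. -/
def RieszMVAlg.Semisimple {A : Type u} (R : RieszMVAlg A) : Prop := R.toMVAlg.Semisimple

/-- Homomorphisms of Riesz MV-algebras. -/
def RieszMVHom {A : Type u} {B : Type v} (R : RieszMVAlg A) (S : RieszMVAlg B) (f : A → B) : Prop :=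
  MVHom R.toMVAlg S.toMVAlg f ∧
  ∀ α : ℝ, α ∈ Set.Icc (0:ℝ) 1 → ∀ x, f (R.smul α x) = S.smul α (f x)

/-- A unital commutative fMV-algebra. -/
structure FMVAlg (A : Type u) extends PMVAlg A, RieszMVAlg A where
  smul_mul_left : ∀ α : ℝ, α ∈ Set.Icc (0:ℝ) 1 → ∀ x y,
    smul α (mul x y) = mul (smul α x) y
  smul_mul_right : ∀ α : ℝ, α ∈ Set.Icc (0:ℝ) 1 → ∀ x y,
    smul α (mul x y) = mul x (smul α y)

/-- Semisimplicity of an fMV-algebra. -/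
def FMVAlg.Semisimple {A : Type u} (F : FMVAlg A) : Prop := F.toMVAlg.Semisimple

/-- Homomorphisms of fMV-algebras preserve `⊕`, `*`, `0`, `·` and scalar multiplication. -/
def FMVHom {A : Type u} {B : Type v} (F : FMVAlg A) (G : FMVAlg B) (f : A → B) : Prop :=
  MVHom F.toMVAlg G.toMVAlg f ∧
  (∀ x y, f (F.mul x y) = G.mul (f x) (f y)) ∧
  (∀ α : ℝ, α ∈ Set.Icc (0:ℝ) 1 → ∀ x, f (F.smul α x) = G.smul α (f x))

namespace MVAlg
variable {A : Type u}

/-- Łukasiewicz product. -/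
def odot (M : MVAlg A) (x y : A) : A := M.star (M.oplus (M.star x) (M.star y))
/-- Truncated subtraction. -/
def ominus (M : MVAlg A) (x y : A) : A := M.star (M.oplus (M.star x) y)
/-- n-fold sum. -/
def nsum (M : MVAlg A) : ℕ → A → A
  | 0, _ => M.zero
  | n+1, x => M.oplus (nsum M n x) x

variable {M : MVAlg A}

theorem oplus_left_comm (x y z : A) : M.oplus x (M.oplus y z) = M.oplus y (M.oplus x z) := by
  rw [← M.oplus_assoc, M.oplus_comm x y, M.oplus_assoc]
theorem zero_oplus (x : A) : M.oplus M.zero x = x := by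
  rw [M.oplus_comm]; exact M.oplus_zero x
theorem star_one : M.star M.one = M.zero := M.star_star _
theorem oplus_top (x : A) : M.oplus x M.one = M.one := M.oplus_one x
theorem one_oplus (x : A) : M.oplus M.one x = M.one := by
  rw [M.oplus_comm]; exact oplus_top x
theorem star_inj {x y : A} (h : M.star x = M.star y) : x = y := by
  have := congrArg M.star h; rwa [M.star_star, M.star_star] at this
theorem star_oplus_self (x : A) : M.oplus (M.star x) x = M.one := by
  have h := M.luk M.one x
  simp only [star_one, zero_oplus, oplus_top, one_oplus] at h
  exact h
theorem oplus_star_self (x : A) : M.oplus x (M.star x) = M.one := by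
  rw [M.oplus_comm]; exact star_oplus_self x

theorem le_refl (x : A) : M.le x x := star_oplus_self x
theorem le_of_eq {x y : A} (h : x = y) : M.le x y := h ▸ le_refl x
theorem zero_le (x : A) : M.le M.zero x := by
  show M.oplus (M.star M.zero) x = M.one
  exact one_oplus x
theorem le_one (x : A) : M.le x M.one := M.oplus_one _
theorem le_antisymm {x y : A} (h1 : M.le x y) (h2 : M.le y x) : x = y := by
  have h := M.luk y x
  unfold MVAlg.le at h1 h2
  rw [h1, h2, star_one, zero_oplus, zero_oplus] at h
  exact h
theorem le_oplus_right (x y : A) : M.le y (M.oplus x y) := by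
  unfold MVAlg.le
  rw [← M.oplus_assoc, M.oplus_comm (M.star y) x, M.oplus_assoc, star_oplus_self, oplus_top]
theorem le_oplus_left (x y : A) : M.le x (M.oplus x y) := by
  rw [M.oplus_comm]; exact le_oplus_right y x

theorem ominus_def (x y : A) : M.ominus x y = M.odot x (M.star y) := by
  unfold MVAlg.ominus MVAlg.odot; rw [M.star_star]

/-- `(x ⊖ y) ⊕ y = (y ⊖ x) ⊕ x`  (this is `luk` in disguise); both equal `x ∨ y`. -/
theorem vee_comm (x y : A) : M.oplus (M.ominus x y) y = M.oplus (M.ominus y x) x := M.luk x y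

theorem le_iff_exists {x y : A} : M.le x y ↔ ∃ z, y = M.oplus x z := by
  constructor
  · intro h
    refine ⟨M.ominus y x, ?_⟩
    rw [M.oplus_comm, vee_comm]
    unfold MVAlg.ominus
    unfold MVAlg.le at h
    rw [h, star_one, zero_oplus]
  · rintro ⟨z, rfl⟩
    unfold MVAlg.le
    rw [← M.oplus_assoc, star_oplus_self, one_oplus]
theorem le_trans {x y z : A} (h1 : M.le x y) (h2 : M.le y z) : M.le x z := by
  rcases le_iff_exists.1 h1 with ⟨a, rfl⟩
  rcases le_iff_exists.1 h2 with ⟨b, rfl⟩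
  exact le_iff_exists.2 ⟨M.oplus a b, M.oplus_assoc x a b⟩
theorem oplus_le_oplus_left {x y : A} (t : A) (h : M.le x y) :
    M.le (M.oplus x t) (M.oplus y t) := by
  rcases le_iff_exists.1 h with ⟨a, rfl⟩
  exact le_iff_exists.2 ⟨a, by rw [M.oplus_assoc, M.oplus_comm a t, M.oplus_assoc]⟩
theorem oplus_le_oplus_right {x y : A} (t : A) (h : M.le x y) :
    M.le (M.oplus t x) (M.oplus t y) := by
  rw [M.oplus_comm t x, M.oplus_comm t y]; exact oplus_le_oplus_left t h
theorem oplus_le_oplus {x y z w : A} (h1 : M.le x y) (h2 : M.le z w) :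
    M.le (M.oplus x z) (M.oplus y w) :=
  le_trans (oplus_le_oplus_left z h1) (oplus_le_oplus_right y h2)
theorem star_le_star {x y : A} (h : M.le x y) : M.le (M.star y) (M.star x) := by
  unfold MVAlg.le at h ⊢
  rw [M.star_star, M.oplus_comm]; exact h
theorem le_of_star_le_star {x y : A} (h : M.le (M.star y) (M.star x)) : M.le x y := by
  have := star_le_star h
  rwa [M.star_star, M.star_star] at this

theorem star_eq_zero_iff {x : A} : M.star x = M.zero ↔ x = M.one := by
  constructor
  · intro h; have := congrArg M.star h; rw [M.star_star] at this; exact this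
  · rintro rfl; exact star_one
theorem le_zero_iff {x : A} : M.le x M.zero ↔ x = M.zero :=
  ⟨fun h => le_antisymm h (zero_le x), fun h => h ▸ le_refl _⟩
theorem one_le_iff {x : A} : M.le M.one x ↔ x = M.one :=
  ⟨fun h => (le_antisymm h (le_one x)).symm, fun h => h ▸ le_refl _⟩

theorem odot_comm (x y : A) : M.odot x y = M.odot y x := by
  unfold MVAlg.odot; rw [M.oplus_comm]
theorem star_odot (x y : A) : M.star (M.odot x y) = M.oplus (M.star x) (M.star y) := by
  unfold MVAlg.odot; rw [M.star_star]
theorem star_oplus (x y : A) : M.star (M.oplus x y) = M.odot (M.star x) (M.star y) := by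
  unfold MVAlg.odot; rw [M.star_star, M.star_star]
theorem odot_assoc (x y z : A) : M.odot (M.odot x y) z = M.odot x (M.odot y z) := by
  unfold MVAlg.odot
  rw [M.star_star, M.star_star, M.oplus_assoc]
theorem odot_one (x : A) : M.odot x M.one = x := by
  unfold MVAlg.odot
  rw [star_one, M.oplus_zero, M.star_star]
theorem one_odot (x : A) : M.odot M.one x = x := by rw [odot_comm]; exact odot_one x
theorem odot_zero (x : A) : M.odot x M.zero = M.zero := by
  unfold MVAlg.odot
  rw [show M.star M.zero = M.one from rfl, oplus_top, star_one]
theorem zero_odot (x : A) : M.odot M.zero x = M.zero := by rw [odot_comm]; exact odot_zero x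
theorem odot_star_self (x : A) : M.odot x (M.star x) = M.zero := by
  unfold MVAlg.odot
  rw [M.star_star, star_oplus_self, star_one]

theorem le_iff_odot {x y : A} : M.le x y ↔ M.odot x (M.star y) = M.zero := by
  unfold MVAlg.le MVAlg.odot
  rw [M.star_star]
  constructor
  · intro h; rw [h, star_one]
  · intro h; have := congrArg M.star h; rw [M.star_star] at this; exact this

theorem ominus_eq_zero_iff {x y : A} : M.ominus x y = M.zero ↔ M.le x y := by
  rw [ominus_def]; exact le_iff_odot.symm

/-- Residuation: x ⊙ y ≤ z ↔ x ≤ y* ⊕ z. -/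
theorem odot_le_iff {x y z : A} : M.le (M.odot x y) z ↔ M.le x (M.oplus (M.star y) z) := by
  rw [le_iff_odot, le_iff_odot, odot_assoc, star_oplus, M.star_star]

theorem odot_le_left (x y : A) : M.le (M.odot x y) x := by
  rw [odot_le_iff]; exact le_oplus_right _ _
theorem odot_le_right (x y : A) : M.le (M.odot x y) y := by
  rw [odot_comm]; exact odot_le_left y x

theorem le_oplus_odot (y t : A) : M.le y (M.oplus (M.star t) (M.odot y t)) :=
  odot_le_iff.1 (le_refl (M.odot y t))

theorem odot_le_odot_left {x y : A} (t : A) (h : M.le x y) : M.le (M.odot x t) (M.odot y t) := by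
  rw [odot_le_iff]
  exact le_trans h (le_oplus_odot y t)
theorem odot_le_odot {x y z w : A} (h1 : M.le x y) (h2 : M.le z w) :
    M.le (M.odot x z) (M.odot y w) := by
  refine le_trans (odot_le_odot_left z h1) ?_
  rw [odot_comm y z, odot_comm y w]
  exact odot_le_odot_left y h2

/-- Key lemma: (a ⊕ b) ⊙ c ≤ (a ⊙ c) ⊕ b. -/
theorem oplus_odot_le (a b c : A) : M.le (M.odot (M.oplus a b) c) (M.oplus (M.odot a c) b) := by
  rw [odot_le_iff]
  refine le_trans (oplus_le_oplus_left b (le_oplus_odot a c)) ?_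
  exact le_of_eq (M.oplus_assoc _ _ _)

theorem ominus_le_left (x y : A) : M.le (M.ominus x y) x :=
  ominus_def x y ▸ odot_le_left x (M.star y)
theorem ominus_le_star (x y : A) : M.le (M.ominus x y) (M.star y) :=
  ominus_def x y ▸ odot_le_right x (M.star y)
theorem le_ominus_oplus (x y : A) : M.le x (M.oplus (M.ominus x y) y) := by
  rw [vee_comm]; exact le_oplus_right _ x

theorem ominus_le_ominus_left {x y : A} (t : A) (h : M.le x y) :
    M.le (M.ominus x t) (M.ominus y t) := by
  rw [ominus_def, ominus_def]; exact odot_le_odot_left _ h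
theorem ominus_le_ominus_right {x y : A} (t : A) (h : M.le x y) :
    M.le (M.ominus t y) (M.ominus t x) := by
  rw [ominus_def, ominus_def, odot_comm t, odot_comm t]
  exact odot_le_odot_left t (star_le_star h)

/-- (a⊕b) ⊖ b ≤ a -/
theorem oplus_ominus_le (a b : A) : M.le (M.ominus (M.oplus a b) b) a := by
  rw [ominus_def, M.oplus_comm a b]
  refine le_trans (oplus_odot_le b a (M.star b)) ?_
  rw [odot_star_self, zero_oplus]
  exact le_refl a

/-- ominus-residuation: x ⊖ y ≤ z ↔ x ≤ y ⊕ z -/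
theorem ominus_le_iff {x y z : A} : M.le (M.ominus x y) z ↔ M.le x (M.oplus y z) := by
  rw [ominus_def, odot_le_iff, M.star_star]

/-- triangle: x ⊖ z ≤ (x ⊖ y) ⊕ (y ⊖ z) -/
theorem ominus_triangle (x y z : A) :
    M.le (M.ominus x z) (M.oplus (M.ominus x y) (M.ominus y z)) := by
  rw [ominus_le_iff]
  refine le_trans (le_ominus_oplus x y) ?_
  refine le_trans (oplus_le_oplus_right _ (le_ominus_oplus y z)) ?_
  refine le_iff_exists.2 ⟨M.zero, ?_⟩
  rw [M.oplus_zero, oplus_left_comm, M.oplus_comm (M.ominus y z) z, oplus_left_comm]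

/-- (x⊕t) ⊖ (y⊕t) ≤ x ⊖ y -/
theorem oplus_ominus_oplus_le (x y t : A) :
    M.le (M.ominus (M.oplus x t) (M.oplus y t)) (M.ominus x y) := by
  rw [ominus_le_iff]
  have h1 : M.le x (M.oplus y (M.ominus x y)) := ominus_le_iff.1 (le_refl _)
  refine le_trans (oplus_le_oplus_left t h1) ?_
  exact le_iff_exists.2 ⟨M.zero, by rw [M.oplus_zero, M.oplus_assoc, M.oplus_comm t,
    ← M.oplus_assoc]⟩

theorem oplus_eq_zero {a b : A} (h : M.oplus a b = M.zero) : a = M.zero := by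
  refine le_zero_iff.1 ?_
  exact h ▸ le_oplus_left a b

/-- If x ⊙ y = 0 then (x ⊕ y) ⊖ y = x. -/
theorem ominus_cancel {x y : A} (h : M.odot x y = M.zero) :
    M.ominus (M.oplus x y) y = x := by
  have hl := M.luk (M.star x) y
  -- (x ⊕ y)* ⊕ y = (y* ⊕ x*)* ⊕ x*
  rw [M.star_star] at hl
  have h2 : M.star (M.oplus (M.star y) (M.star x)) = M.zero := by
    have : M.odot y x = M.zero := by rw [odot_comm]; exact h
    unfold MVAlg.odot at this; exact this
  unfold MVAlg.ominus
  rw [hl, h2, zero_oplus, M.star_star]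

/-- complement is unique: a⊕b = 1 and a⊙b = 0 imply b = a*. -/
theorem eq_star_of_compl {a b : A} (h1 : M.oplus a b = M.one) (h2 : M.odot a b = M.zero) :
    b = M.star a := by
  have h3 : M.odot b a = M.zero := by rw [odot_comm]; exact h2
  have := ominus_cancel h3
  rw [M.oplus_comm b a, h1] at this
  unfold MVAlg.ominus at this
  rw [star_one, zero_oplus] at this
  exact this.symm

end MVAlg
namespace MVAlg
variable {A : Type u} {M : MVAlg A}

/-- join -/
def vee (M : MVAlg A) (x y : A) : A := M.oplus (M.ominus x y) y
/-- meet -/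
def wedge (M : MVAlg A) (x y : A) : A := M.star (M.vee (M.star x) (M.star y))

theorem vee_comm' (x y : A) : M.vee x y = M.vee y x := vee_comm x y

theorem le_vee_right (x y : A) : M.le y (M.vee x y) := le_oplus_right _ _
theorem le_vee_left (x y : A) : M.le x (M.vee x y) := by
  unfold MVAlg.vee; rw [vee_comm]; exact le_oplus_right _ _
theorem vee_absorb {s y : A} (h : M.le y s) : M.vee s y = s := by
  rw [vee_comm' s y]
  unfold MVAlg.vee
  rw [ominus_eq_zero_iff.2 h, zero_oplus]
theorem vee_le {x y z : A} (h1 : M.le x z) (h2 : M.le y z) : M.le (M.vee x y) z := by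
  have h3 : M.le (M.vee x y) (M.vee z y) :=
    oplus_le_oplus_left y (ominus_le_ominus_left y h1)
  rwa [vee_absorb h2] at h3

theorem star_wedge (x y : A) : M.star (M.wedge x y) = M.vee (M.star x) (M.star y) := by
  unfold MVAlg.wedge; rw [M.star_star]
theorem star_vee (x y : A) : M.star (M.vee x y) = M.wedge (M.star x) (M.star y) := by
  unfold MVAlg.wedge; rw [M.star_star, M.star_star]

theorem wedge_le_left (x y : A) : M.le (M.wedge x y) x := by
  refine le_of_star_le_star ?_
  rw [star_wedge]; exact le_vee_left _ _
theorem wedge_le_right (x y : A) : M.le (M.wedge x y) y := by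
  refine le_of_star_le_star ?_
  rw [star_wedge]; exact le_vee_right _ _
theorem le_wedge {x y z : A} (h1 : M.le z x) (h2 : M.le z y) : M.le z (M.wedge x y) := by
  refine le_of_star_le_star ?_
  rw [star_wedge]
  exact vee_le (star_le_star h1) (star_le_star h2)

theorem wedge_comm (x y : A) : M.wedge x y = M.wedge y x := by
  unfold MVAlg.wedge; rw [vee_comm' (M := M)]

/-- x ∧ y = x ⊙ (x* ⊕ y) -/
theorem wedge_eq_odot (a b : A) : M.wedge a b = M.odot a (M.oplus (M.star a) b) := by
  unfold MVAlg.wedge MVAlg.vee MVAlg.ominus MVAlg.odot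
  rw [M.star_star]
  have hluk := M.luk (M.star a) (M.star b)
  rw [M.star_star] at hluk
  -- hluk : (a ⊕ b*)* ⊕ b* = (b** ⊕ a*)* ⊕ a*
  rw [hluk, M.star_star, M.oplus_comm b (M.star a), M.oplus_comm _ (M.star a)]

/-- a = (a ∧ b) ⊕ (a ⊖ b) -/
theorem wedge_oplus_ominus (a b : A) : M.oplus (M.wedge a b) (M.ominus a b) = a := by
  rw [wedge_eq_odot]
  unfold MVAlg.odot MVAlg.ominus
  -- goal: (a* ⊕ (a*⊕b)*)* ⊕ (a*⊕b)* = a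
  have hluk := M.luk a (M.star (M.oplus (M.star a) b))
  rw [hluk]
  have h1 : M.oplus (M.star (M.star (M.oplus (M.star a) b))) a = M.one := by
    rw [M.star_star, M.oplus_assoc, M.oplus_comm b a, ← M.oplus_assoc,
      star_oplus_self, one_oplus]
  rw [h1, star_one, zero_oplus]

/-- Riesz decomposition: a ≤ b ⊕ c gives a = a₁ ⊕ a₂ with a₁ ≤ b, a₂ ≤ c. -/
theorem riesz_decomp {a b c : A} (h : M.le a (M.oplus b c)) :
    ∃ a1 a2, a = M.oplus a1 a2 ∧ M.le a1 b ∧ M.le a2 c := by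
  refine ⟨M.wedge a b, M.ominus a b, (wedge_oplus_ominus a b).symm, wedge_le_right a b, ?_⟩
  refine le_trans (ominus_le_ominus_left b h) ?_
  rw [M.oplus_comm b c]
  exact oplus_ominus_le c b

/-- x ∧ (y ⊕ z) ≤ (x ∧ y) ⊕ (x ∧ z). -/
theorem wedge_oplus_le (x y z : A) :
    M.le (M.wedge x (M.oplus y z)) (M.oplus (M.wedge x y) (M.wedge x z)) := by
  obtain ⟨a1, a2, hd, h1, h2⟩ := riesz_decomp (wedge_le_right x (M.oplus y z))
  have hx1 : M.le a1 x := le_trans (hd ▸ le_oplus_left a1 a2) (wedge_le_left _ _)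
  have hx2 : M.le a2 x := le_trans (hd ▸ le_oplus_right a1 a2) (wedge_le_left _ _)
  have := oplus_le_oplus (le_wedge hx1 h1) (le_wedge hx2 h2)
  rw [← hd] at this
  exact this

/-- the key identity: (p ⊕ q) ⊕ (p ⊙ q) = p ⊕ q -/
theorem oplus_oplus_odot (p q : A) :
    M.oplus (M.oplus p q) (M.odot p q) = M.oplus p q := by
  set s := M.oplus p q with hs
  set r := M.ominus s q with hr
  -- r ⊙ q = 0
  have h1 : M.odot r q = M.zero := by
    rw [hr, ominus_def, odot_assoc, odot_comm (M.star q) q]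
    rw [show M.odot q (M.star q) = M.zero from odot_star_self q, odot_zero]
  -- luk instance: s* ⊕ q = (q ⊙ p) ⊕ p*
  have h2 : M.oplus (M.star s) q = M.oplus (M.odot q p) (M.star p) := by
    have hluk := M.luk (M.star p) q
    rw [M.star_star] at hluk
    -- hluk : (p ⊕ q)* ⊕ q = (q* ⊕ p*)* ⊕ p*
    rw [hs]
    rw [hluk]
    rfl
  -- (q⊙p) ⊙ p* = 0
  have h3 : M.odot (M.odot q p) (M.star p) = M.zero := by
    rw [odot_assoc, odot_star_self, odot_zero]
  -- q ⊙ p = (s* ⊕ q) ⊙ p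
  have h4 : M.odot q p = M.odot (M.oplus (M.star s) q) p := by
    have h5 := ominus_cancel h3
    rw [← h2] at h5
    rw [← h5, ominus_def, M.star_star]
  -- star r = s* ⊕ q
  have h6 : M.star r = M.oplus (M.star s) q := by
    rw [hr]; unfold MVAlg.ominus; rw [M.star_star]
  -- g := q ⊙ p satisfies g = p ⊖ r
  have h7 : M.odot q p = M.ominus p r := by
    rw [h4, ← h6, ominus_def, odot_comm]
  -- r ≤ p
  have h8 : M.le r p := oplus_ominus_le p q
  -- g ⊕ r = p
  have h9 : M.oplus (M.odot q p) r = p := by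
    rw [h7]
    have := vee_absorb h8
    unfold MVAlg.vee at this
    exact this
  -- q ⊕ r = s
  have h10 : M.oplus r q = s := by
    have hqs : M.le q s := le_oplus_right p q
    have := vee_absorb hqs
    unfold MVAlg.vee at this
    rw [← hr] at this
    exact this
  -- assemble
  calc M.oplus s (M.odot p q) = M.oplus (M.oplus r q) (M.odot q p) := by
        rw [h10, odot_comm p q]
    _ = M.oplus q (M.oplus (M.odot q p) r) := by
        rw [M.oplus_comm r q, M.oplus_assoc, M.oplus_comm r _]
    _ = M.oplus q p := by rw [h9]
    _ = s := by rw [M.oplus_comm, hs]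

/-- (x ⊖ y) ∧ (y ⊖ x) = 0. -/
theorem ominus_wedge_ominus (x y : A) :
    M.wedge (M.ominus x y) (M.ominus y x) = M.zero := by
  set a := M.ominus x y with ha
  set b := M.ominus y x with hb
  have hsa : M.star a = M.oplus (M.star x) y := by
    rw [ha]; unfold MVAlg.ominus; rw [M.star_star]
  have hbo : b = M.odot (M.star x) y := by
    rw [hb]; unfold MVAlg.ominus MVAlg.odot
    rw [M.star_star, M.oplus_comm]
  have hC := oplus_oplus_odot (M := M) (M.star x) y
  -- (x*⊕y) ⊕ (x*⊙y) = x*⊕y  i.e.  a* ⊕ b = a*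
  have habs : M.oplus (M.star a) b = M.star a := by
    rw [hsa, hbo]; exact hC
  rw [wedge_eq_odot, habs, odot_star_self]

/-- a ∧ b = 0 → (n·a) ∧ b = 0 -/
theorem nsum_wedge_zero {a b : A} (h : M.wedge a b = M.zero) (n : ℕ) :
    M.wedge (M.nsum n a) b = M.zero := by
  induction n with
  | zero =>
      refine le_antisymm ?_ (zero_le _)
      exact wedge_le_left _ _
  | succ n ih =>
      refine le_antisymm ?_ (zero_le _)
      show M.le (M.wedge (M.oplus (M.nsum n a) a) b) M.zero
      rw [wedge_comm]
      refine le_trans (wedge_oplus_le b (M.nsum n a) a) ?_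
      rw [wedge_comm b, ih, wedge_comm b a, h, M.oplus_zero]
      exact le_refl _

end MVAlg
namespace MVAlg
variable {A : Type u} {M : MVAlg A}

theorem nsum_add (n1 n2 : ℕ) (a : A) :
    M.nsum (n1 + n2) a = M.oplus (M.nsum n1 a) (M.nsum n2 a) := by
  induction n2 with
  | zero => show M.nsum n1 a = _; rw [show M.nsum 0 a = M.zero from rfl, M.oplus_zero]
  | succ k ih =>
      show M.nsum (n1 + k + 1) a = _
      show M.oplus (M.nsum (n1 + k) a) a = _
      rw [ih]
      show _ = M.oplus (M.nsum n1 a) (M.oplus (M.nsum k a) a)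
      rw [M.oplus_assoc]

theorem nsum_le_nsum {a b : A} (h : M.le a b) (n : ℕ) :
    M.le (M.nsum n a) (M.nsum n b) := by
  induction n with
  | zero => exact le_refl _
  | succ n ih => exact oplus_le_oplus ih h

theorem nsum_mem_ideal {I : Set A} (hI : M.IsIdeal I) {a : A} (ha : a ∈ I) (n : ℕ) :
    M.nsum n a ∈ I := by
  induction n with
  | zero => exact hI.1
  | succ n ih => exact hI.2.1 _ ih _ ha

theorem mem_of_le_ideal {I : Set A} (hI : M.IsIdeal I) {a b : A} (h : M.le a b) (hb : b ∈ I) :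
    a ∈ I := hI.2.2 a b h hb

theorem ideal_eq_univ_iff {I : Set A} (hI : M.IsIdeal I) : I = Set.univ ↔ M.one ∈ I := by
  constructor
  · intro h; rw [h]; trivial
  · intro h
    ext t
    simp only [Set.mem_univ, iff_true]
    exact mem_of_le_ideal hI (le_one t) h

/-- the ideal generated by an ideal I and an element a -/
def genIdeal (M : MVAlg A) (I : Set A) (a : A) : Set A :=
  {t | ∃ m ∈ I, ∃ n : ℕ, M.le t (M.oplus m (M.nsum n a))}

theorem genIdeal_isIdeal {I : Set A} (hI : M.IsIdeal I) (a : A) :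
    M.IsIdeal (M.genIdeal I a) := by
  refine ⟨⟨M.zero, hI.1, 0, ?_⟩, ?_, ?_⟩
  · exact zero_le _
  · rintro x ⟨m1, hm1, n1, h1⟩ y ⟨m2, hm2, n2, h2⟩
    refine ⟨M.oplus m1 m2, hI.2.1 _ hm1 _ hm2, n1 + n2, ?_⟩
    refine le_trans (oplus_le_oplus h1 h2) (le_of_eq ?_)
    rw [nsum_add, M.oplus_assoc, M.oplus_assoc, oplus_left_comm (M.nsum n1 a) m2]
  · rintro x y hxy ⟨m, hm, n, h⟩
    exact ⟨m, hm, n, le_trans hxy h⟩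

theorem subset_genIdeal {I : Set A} (hI : M.IsIdeal I) (a : A) : I ⊆ M.genIdeal I a :=
  fun m hm => ⟨m, hm, 0, le_of_eq (M.oplus_zero m).symm⟩

theorem mem_genIdeal {I : Set A} (hI : M.IsIdeal I) (a : A) : a ∈ M.genIdeal I a :=
  ⟨M.zero, hI.1, 1, by
    refine le_of_eq ?_
    show a = M.oplus M.zero (M.oplus M.zero a)
    rw [zero_oplus, zero_oplus]⟩

/-- maximal ideals are prime -/
theorem maximal_prime {I : Set A} (hI : M.IsMaximalIdeal I) (x y : A) :
    M.ominus x y ∈ I ∨ M.ominus y x ∈ I := by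
  by_contra h
  push_neg at h
  obtain ⟨ha, hb⟩ := h
  set a := M.ominus x y
  set b := M.ominus y x
  -- genIdeal I a is an ideal containing I and a, ≠ I, so = univ
  have hgen := genIdeal_isIdeal hI.1 a
  have hne : M.genIdeal I a ≠ I := fun hEq => ha (hEq ▸ mem_genIdeal hI.1 a)
  have huniv : M.genIdeal I a = Set.univ := by
    by_contra hu
    exact hne (hI.2.2 _ hgen hu (subset_genIdeal hI.1 a))
  have hbmem : b ∈ M.genIdeal I a := huniv ▸ Set.mem_univ b
  obtain ⟨m, hm, n, hble⟩ := hbmem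
  -- b = b ∧ (m ⊕ n·a) ≤ (b ∧ m) ⊕ (b ∧ n·a) ≤ m ⊕ 0
  have hw : M.wedge a b = M.zero := ominus_wedge_ominus x y
  have hw' : M.wedge (M.nsum n a) b = M.zero := nsum_wedge_zero hw n
  have h1 : M.le b (M.wedge b (M.oplus m (M.nsum n a))) := le_wedge (le_refl b) hble
  have h2 : M.le (M.wedge b (M.oplus m (M.nsum n a)))
      (M.oplus (M.wedge b m) (M.wedge b (M.nsum n a))) := wedge_oplus_le _ _ _
  have h3 : M.le b (M.oplus (M.wedge b m) (M.wedge b (M.nsum n a))) := le_trans h1 h2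
  rw [wedge_comm b (M.nsum n a), hw', M.oplus_zero] at h3
  exact hb (mem_of_le_ideal hI.1 (le_trans h3 (wedge_le_right b m)) hm)

/-- in a maximal ideal's complement, some multiple reaches 1 modulo the ideal -/
theorem maximal_archimedean {I : Set A} (hI : M.IsMaximalIdeal I) {x : A} (hx : x ∉ I) :
    ∃ n : ℕ, M.star (M.nsum n x) ∈ I := by
  have hgen := genIdeal_isIdeal hI.1 x
  have hne : M.genIdeal I x ≠ I := fun hEq => hx (hEq ▸ mem_genIdeal hI.1 x)
  have huniv : M.genIdeal I x = Set.univ := by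
    by_contra hu
    exact hne (hI.2.2 _ hgen hu (subset_genIdeal hI.1 x))
  have h1 : M.one ∈ M.genIdeal I x := huniv ▸ Set.mem_univ _
  obtain ⟨m, hm, n, hle⟩ := h1
  refine ⟨n, ?_⟩
  -- 1 = m ⊕ n·x  hence  (n·x)* ≤ m
  have heq : M.oplus m (M.nsum n x) = M.one := le_antisymm (le_one _) hle
  have h2 : M.le (M.star (M.nsum n x)) m := by
    have h3 := oplus_odot_le (M := M) (M.nsum n x) m (M.star (M.nsum n x))
    rw [odot_star_self, zero_oplus, M.oplus_comm (M.nsum n x) m, heq, one_odot] at h3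
    exact h3
  exact mem_of_le_ideal hI.1 h2 hm

theorem oneNotMem_of_maximal {I : Set A} (hI : M.IsMaximalIdeal I) : M.one ∉ I := by
  intro h
  exact hI.2.1 ((ideal_eq_univ_iff hI.1).2 h)

/-- every proper ideal extends to a maximal ideal (Zorn) -/
theorem exists_maximal_ideal {I : Set A} (hI : M.IsIdeal I) (hproper : M.one ∉ I) :
    ∃ J, I ⊆ J ∧ M.IsMaximalIdeal J := by
  set S : Set (Set A) := {J | M.IsIdeal J ∧ M.one ∉ J}
  have hzorn := zorn_subset_nonempty S ?_ I ⟨hI, hproper⟩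
  · obtain ⟨m, hIm, hmS, hmax⟩ := hzorn
    refine ⟨m, hIm, hmS.1, ?_, ?_⟩
    · intro hu
      exact hmS.2 (hu ▸ Set.mem_univ _)
    · intro J hJ hJu hmJ
      have hJS : J ∈ S := ⟨hJ, fun h1 => hJu ((ideal_eq_univ_iff hJ).2 h1)⟩
      exact Set.Subset.antisymm (hmax hJS hmJ) hmJ
  · intro c hcS hchain hcne
    refine ⟨⋃₀ c, ⟨⟨?_, ?_, ?_⟩, ?_⟩, fun s hs => Set.subset_sUnion_of_mem hs⟩
    · obtain ⟨t, ht⟩ := hcne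
      exact ⟨t, ht, (hcS ht).1.1⟩
    · rintro x ⟨t1, ht1, hx1⟩ y ⟨t2, ht2, hy2⟩
      rcases hchain.total ht1 ht2 with h | h
      · exact ⟨t2, ht2, (hcS ht2).1.2.1 x (h hx1) y hy2⟩
      · exact ⟨t1, ht1, (hcS ht1).1.2.1 x hx1 y (h hy2)⟩
    · rintro x y hxy ⟨t, ht, hy⟩
      exact ⟨t, ht, (hcS ht).1.2.2 x y hxy hy⟩
    · rintro ⟨t, ht, h1⟩
      exact (hcS ht).2 h1

end MVAlg
namespace MVAlg
variable {A : Type u} {M : MVAlg A}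
theorem oplus_ominus_of_le {x y : A} (h : M.le x y) : M.oplus x (M.ominus y x) = y := by
  rw [M.oplus_comm, vee_comm]
  unfold MVAlg.ominus
  unfold MVAlg.le at h
  rw [h, star_one, zero_oplus]
end MVAlg

namespace RieszMVAlg
open MVAlg
variable {A : Type u} (R : RieszMVAlg A)

theorem smul_zero' (x : A) : R.smul 0 x = R.toMVAlg.zero := by
  have h := R.add_smul 0 0 (by norm_num) (by norm_num) (by norm_num) x
  rw [show (0:ℝ) + 0 = 0 by norm_num] at h
  obtain ⟨h1, h2⟩ := h
  have h3 : R.toMVAlg.odot (R.smul 0 x) (R.smul 0 x) = R.toMVAlg.zero := by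
    have := le_iff_odot.1 h2
    rwa [R.toMVAlg.star_star] at this
  have h4 := ominus_cancel h3
  rw [← h1] at h4
  rw [ominus_eq_zero_iff.2 (le_refl _)] at h4
  exact h4.symm

theorem smul_le_self {α : ℝ} (hα : α ∈ Set.Icc (0:ℝ) 1) (x : A) :
    R.toMVAlg.le (R.smul α x) x := by
  have h := (R.add_smul α (1 - α) hα ⟨by linarith [hα.2], by linarith [hα.1]⟩
    (by linarith) x).1
  rw [show α + (1 - α) = (1:ℝ) by ring, R.one_smul] at h
  exact le_iff_exists.2 ⟨_, h⟩

theorem smul_mono_scalar {α β : ℝ} (hα : 0 ≤ α) (hαβ : α ≤ β) (hβ : β ≤ 1) (x : A) :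
    R.toMVAlg.le (R.smul α x) (R.smul β x) := by
  have h := (R.add_smul α (β - α) ⟨hα, by linarith⟩ ⟨by linarith, by linarith⟩
    (by linarith) x).1
  rw [show α + (β - α) = β by ring] at h
  exact le_iff_exists.2 ⟨_, h⟩

theorem smul_mono_vec {α : ℝ} (hα : α ∈ Set.Icc (0:ℝ) 1) {x y : A}
    (h : R.toMVAlg.le x y) : R.toMVAlg.le (R.smul α x) (R.smul α y) := by
  have hd : R.toMVAlg.le x (R.toMVAlg.star (R.toMVAlg.ominus y x)) := by
    have := star_le_star (ominus_le_star (M := R.toMVAlg) y x)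
    rwa [R.toMVAlg.star_star] at this
  have hs := R.smul_oplus α hα x (R.toMVAlg.ominus y x) hd
  rw [oplus_ominus_of_le h] at hs
  exact le_iff_exists.2 ⟨_, hs⟩

theorem smul_odot_zero {α : ℝ} (hα : α ∈ Set.Icc (0:ℝ) 1) {x y : A}
    (h : R.toMVAlg.odot x y = R.toMVAlg.zero) :
    R.toMVAlg.odot (R.smul α x) (R.smul α y) = R.toMVAlg.zero := by
  refine le_zero_iff.1 ?_
  have := odot_le_odot (smul_le_self R hα x) (smul_le_self R hα y)
  rw [h] at this
  exact this

/-- α(x ⊖ y) ⊒ αx ⊖ αy -/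
theorem smul_ominus_le {α : ℝ} (hα : α ∈ Set.Icc (0:ℝ) 1) (x y : A) :
    R.toMVAlg.le (R.toMVAlg.ominus (R.smul α x) (R.smul α y))
      (R.smul α (R.toMVAlg.ominus x y)) := by
  set N := R.toMVAlg
  have hdisj : N.le (N.ominus x y) (N.star y) := ominus_le_star x y
  have hs := R.smul_oplus α hα (N.ominus x y) y hdisj
  -- hs : α(x∨y) = α(x⊖y) ⊕ αy
  have hz : N.odot (N.ominus x y) y = N.zero := by
    refine le_zero_iff.1 ?_
    have h2 := odot_le_odot_left (M := N) y hdisj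
    rwa [show N.odot (N.star y) y = N.zero by
      have := odot_star_self (M := N) (N.star y)
      rwa [N.star_star] at this] at h2
  have hz' := smul_odot_zero R hα hz
  have hcan := ominus_cancel hz'
  -- hcan : (α(x⊖y) ⊕ αy) ⊖ αy = α(x⊖y)
  rw [← hs] at hcan
  -- αx ≤ α(x∨y)
  have hxv : N.le (R.smul α x) (R.smul α (N.oplus (N.ominus x y) y)) := by
    refine smul_mono_vec R hα ?_
    exact le_ominus_oplus x y
  have hfin := ominus_le_ominus_left (M := N) (R.smul α y) hxv
  rwa [hcan] at hfin

/-- (β·1)* = (1-β)·1 -/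
theorem smul_one_star {β : ℝ} (hβ : β ∈ Set.Icc (0:ℝ) 1) :
    R.toMVAlg.star (R.smul β R.toMVAlg.one) = R.smul (1 - β) R.toMVAlg.one := by
  set N := R.toMVAlg
  have h := R.add_smul β (1 - β) hβ ⟨by linarith [hβ.2], by linarith [hβ.1]⟩
    (by linarith) N.one
  rw [show β + (1 - β) = (1:ℝ) by ring, R.one_smul] at h
  obtain ⟨h1, h2⟩ := h
  have h3 : N.odot (R.smul β N.one) (R.smul (1 - β) N.one) = N.zero := by
    have := le_iff_odot.1 h2
    rwa [N.star_star] at this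
  exact (eq_star_of_compl h1.symm h3).symm

/-- (β·1) ⊖ (γ·1) = (β-γ)·1 for γ ≤ β -/
theorem smul_one_ominus {β γ : ℝ} (hγ : 0 ≤ γ) (hγβ : γ ≤ β) (hβ : β ≤ 1) :
    R.toMVAlg.ominus (R.smul β R.toMVAlg.one) (R.smul γ R.toMVAlg.one)
      = R.smul (β - γ) R.toMVAlg.one := by
  set N := R.toMVAlg
  have h := R.add_smul γ (β - γ) ⟨hγ, by linarith⟩ ⟨by linarith, by linarith⟩
    (by linarith) N.one
  rw [show γ + (β - γ) = β by ring] at h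
  obtain ⟨h1, h2⟩ := h
  have h3 : N.odot (R.smul (β - γ) N.one) (R.smul γ N.one) = N.zero := by
    have := le_iff_odot.1 h2
    rw [N.star_star] at this
    rwa [odot_comm] at this
  have h4 := ominus_cancel h3
  rw [N.oplus_comm, ← h1] at h4
  exact h4

/-- α·1 ⊕ β·1 = (α+β)·1 when α+β ≤ 1 -/
theorem smul_one_oplus_of_le {α β : ℝ} (hα : α ∈ Set.Icc (0:ℝ) 1) (hβ : β ∈ Set.Icc (0:ℝ) 1)
    (h : α + β ≤ 1) (x : A) :
    R.toMVAlg.oplus (R.smul α x) (R.smul β x) = R.smul (α + β) x :=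
  ((R.add_smul α β hα hβ h x).1).symm

/-- α·1 ⊕ β·1 = 1 when α+β ≥ 1 -/
theorem smul_one_oplus_of_ge {α β : ℝ} (hα : α ∈ Set.Icc (0:ℝ) 1) (hβ : β ∈ Set.Icc (0:ℝ) 1)
    (h : 1 ≤ α + β) :
    R.toMVAlg.oplus (R.smul α R.toMVAlg.one) (R.smul β R.toMVAlg.one) = R.toMVAlg.one := by
  set N := R.toMVAlg
  refine le_antisymm (le_one _) ?_
  have h1 : N.oplus (R.smul α N.one) (R.smul (1 - α) N.one) = R.smul 1 N.one := by
    rw [smul_one_oplus_of_le R hα ⟨by linarith [hα.2], by linarith [hα.1]⟩ (by linarith)]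
    norm_num
  rw [R.one_smul] at h1
  have h2 : N.le (R.smul (1 - α) N.one) (R.smul β N.one) :=
    smul_mono_scalar R (by linarith [hα.2]) (by linarith) hβ.2 N.one
  have := oplus_le_oplus_right (M := N) (R.smul α N.one) h2
  rw [h1] at this
  exact this

/-- min(nα,1)·1 ≤ n·(α·1) -/
theorem le_nsum_smul_one {α : ℝ} (hα : α ∈ Set.Icc (0:ℝ) 1) (n : ℕ) :
    R.toMVAlg.le (R.smul (min ((n:ℝ) * α) 1) R.toMVAlg.one)
      (R.toMVAlg.nsum n (R.smul α R.toMVAlg.one)) := by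
  set N := R.toMVAlg
  induction n with
  | zero =>
      rw [show ((0:ℕ):ℝ) * α = 0 by norm_num, show min (0:ℝ) 1 = 0 by norm_num, smul_zero']
      exact le_refl _
  | succ n ih =>
      have hn0 : (0:ℝ) ≤ (n:ℝ) * α := mul_nonneg (Nat.cast_nonneg n) hα.1
      have hcast : ((n+1:ℕ):ℝ) * α = (n:ℝ) * α + α := by push_cast; ring
      rcases le_or_gt ((n:ℝ) * α + α) 1 with h1 | h1
      · have hn1 : (n:ℝ) * α ≤ 1 := by linarith [hα.1]
        rw [hcast, min_eq_left h1]
        rw [min_eq_left hn1] at ih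
        have heq := smul_one_oplus_of_le R (x := N.one) ⟨hn0, hn1⟩ hα (by linarith)
        exact le_trans (le_of_eq heq.symm) (oplus_le_oplus ih (MVAlg.le_refl _))
      · rcases le_or_gt ((n:ℝ) * α) 1 with h2 | h2
        · rw [hcast, min_eq_right (by linarith : (1:ℝ) ≤ (n:ℝ) * α + α), R.one_smul]
          rw [min_eq_left h2] at ih
          have hge := smul_one_oplus_of_ge R ⟨hn0, h2⟩ hα (by linarith)
          exact le_trans (le_of_eq hge.symm) (oplus_le_oplus ih (MVAlg.le_refl _))
        · rw [hcast, min_eq_right (by linarith : (1:ℝ) ≤ (n:ℝ) * α + α), R.one_smul]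
          rw [min_eq_right (le_of_lt h2), R.one_smul] at ih
          exact le_trans ih (le_oplus_left _ _)

/-- a positive scalar multiple of 1 in a proper ideal is absurd -/
theorem smul_one_notMem {I : Set A} (hI : R.toMVAlg.IsIdeal I) (hproper : R.toMVAlg.one ∉ I)
    {α : ℝ} (hα : α ∈ Set.Icc (0:ℝ) 1) (hpos : 0 < α) :
    R.smul α R.toMVAlg.one ∉ I := by
  intro hmem
  set N := R.toMVAlg
  obtain ⟨n, hn⟩ := exists_nat_ge (1 / α)
  have hineq : (1:ℝ) ≤ (n:ℝ) * α := by
    rw [div_le_iff₀ hpos] at hn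
    linarith
  have h1 := le_nsum_smul_one R hα n
  rw [min_eq_right hineq, R.one_smul] at h1
  have h2 : N.nsum n (R.smul α N.one) ∈ I := nsum_mem_ideal hI hmem n
  exact hproper (mem_of_le_ideal hI h1 h2)

theorem ideal_smul_mem {I : Set A} (hI : R.toMVAlg.IsIdeal I) {x : A} (hx : x ∈ I)
    {α : ℝ} (hα : α ∈ Set.Icc (0:ℝ) 1) : R.smul α x ∈ I :=
  mem_of_le_ideal hI (smul_le_self R hα x) hx

end RieszMVAlg

namespace RieszMVAlg
open MVAlg
variable {A : Type u} (R : RieszMVAlg A)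

/-- n·(α·1) ≤ min(nα,1)·1 -/
theorem nsum_smul_one_le {α : ℝ} (hα : α ∈ Set.Icc (0:ℝ) 1) (n : ℕ) :
    R.toMVAlg.le (R.toMVAlg.nsum n (R.smul α R.toMVAlg.one))
      (R.smul (min ((n:ℝ) * α) 1) R.toMVAlg.one) := by
  set N := R.toMVAlg
  induction n with
  | zero => exact zero_le _
  | succ n ih =>
      have hn0 : (0:ℝ) ≤ (n:ℝ) * α := mul_nonneg (Nat.cast_nonneg n) hα.1
      have hcast : ((n+1:ℕ):ℝ) * α = (n:ℝ) * α + α := by push_cast; ring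
      show N.le (N.oplus (N.nsum n (R.smul α N.one)) (R.smul α N.one)) _
      rcases le_or_gt ((n:ℝ) * α + α) 1 with h1 | h1
      · have hn1 : (n:ℝ) * α ≤ 1 := by linarith [hα.1]
        rw [min_eq_left hn1] at ih
        rw [hcast, min_eq_left h1]
        refine le_trans (oplus_le_oplus ih (MVAlg.le_refl _)) ?_
        exact le_of_eq (smul_one_oplus_of_le R ⟨hn0, hn1⟩ hα (by linarith) N.one)
      · rw [hcast, min_eq_right (by linarith : (1:ℝ) ≤ (n:ℝ) * α + α), R.one_smul]
        exact le_one _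
end RieszMVAlg
/-! The standard Riesz MV-algebra on [0,1]. -/

abbrev I01 : Type := {r : ℝ // 0 ≤ r ∧ r ≤ 1}

namespace I01
noncomputable def clamp (α : ℝ) : ℝ := min (max α 0) 1
theorem clamp_mem (α : ℝ) : 0 ≤ clamp α ∧ clamp α ≤ 1 := by
  constructor
  · exact le_min (le_max_right α 0) (by norm_num)
  · exact min_le_right _ _
theorem clamp_eq {α : ℝ} (hα : α ∈ Set.Icc (0:ℝ) 1) : clamp α = α := by
  unfold clamp
  rw [max_eq_left hα.1, min_eq_left hα.2]
end I01

noncomputable def I01mv : MVAlg I01 where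
  oplus x y := ⟨min (x.1 + y.1) 1,
    le_min (add_nonneg x.2.1 y.2.1) (by norm_num), min_le_right _ _⟩
  star x := ⟨1 - x.1, by constructor <;> [linarith [x.2.2]; linarith [x.2.1]]⟩
  zero := ⟨0, le_refl 0, by norm_num⟩
  oplus_comm x y := by apply Subtype.ext; dsimp; rw [add_comm]
  oplus_assoc x y z := by
    apply Subtype.ext; dsimp
    rcases x.2 with ⟨hx0, hx1⟩; rcases y.2 with ⟨hy0, hy1⟩; rcases z.2 with ⟨hz0, hz1⟩
    simp only [min_def]; split_ifs <;> linarith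
  oplus_zero x := by
    apply Subtype.ext; dsimp
    rw [add_zero, min_eq_left x.2.2]
  star_star x := by apply Subtype.ext; dsimp; ring
  oplus_one x := by
    apply Subtype.ext; dsimp
    rcases x.2 with ⟨hx0, hx1⟩
    simp only [min_def]; split_ifs <;> linarith
  luk x y := by
    apply Subtype.ext; dsimp
    rcases x.2 with ⟨hx0, hx1⟩; rcases y.2 with ⟨hy0, hy1⟩
    simp only [min_def]; split_ifs <;> linarith

namespace I01mv
theorem oplus_val (x y : I01) : (I01mv.oplus x y).1 = min (x.1 + y.1) 1 := rfl
theorem star_val (x : I01) : (I01mv.star x).1 = 1 - x.1 := rfl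
theorem zero_val : (I01mv.zero).1 = 0 := rfl
theorem one_val : (I01mv.one).1 = 1 := by
  show (I01mv.star I01mv.zero).1 = 1
  rw [star_val, zero_val]; norm_num

theorem le_iff {x y : I01} : I01mv.le x y ↔ x.1 ≤ y.1 := by
  unfold MVAlg.le
  constructor
  · intro h
    have hval := congrArg Subtype.val h
    rw [oplus_val, star_val, one_val] at hval
    rcases le_or_gt (1 - x.1 + y.1) 1 with h1 | h1
    · rw [min_eq_left h1] at hval; linarith
    · linarith
  · intro h
    apply Subtype.ext
    rw [oplus_val, star_val, one_val, min_eq_right (by linarith)]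
end I01mv

noncomputable def I01alg : RieszMVAlg I01 where
  toMVAlg := I01mv
  smul α x := ⟨I01.clamp α * x.1,
    mul_nonneg (I01.clamp_mem α).1 x.2.1,
    le_trans (mul_le_mul (I01.clamp_mem α).2 x.2.2 x.2.1 (by norm_num)) (by norm_num)⟩
  smul_oplus α hα x y h := by
    apply Subtype.ext
    have hxy : x.1 + y.1 ≤ 1 := by
      have := I01mv.le_iff.1 h
      rw [I01mv.star_val] at this
      linarith
    show I01.clamp α * (I01mv.oplus x y).1 = (I01mv.oplus _ _).1
    rw [I01mv.oplus_val, I01mv.oplus_val]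
    show _ = min (I01.clamp α * x.1 + I01.clamp α * y.1) 1
    rw [I01.clamp_eq hα]
    rcases x.2 with ⟨hx0, hx1⟩; rcases y.2 with ⟨hy0, hy1⟩
    rw [min_eq_left hxy, min_eq_left (by nlinarith [hα.1, hα.2] : α * x.1 + α * y.1 ≤ 1)]
    ring
  add_smul α β hα hβ hab x := by
    have hx0 := x.2.1
    have hx1 := x.2.2
    have h1 : α * x.1 + β * x.1 ≤ 1 := by nlinarith [hα.1, hβ.1]
    constructor
    · apply Subtype.ext
      show I01.clamp (α + β) * x.1 = (I01mv.oplus _ _).1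
      rw [I01mv.oplus_val]
      show _ = min (I01.clamp α * x.1 + I01.clamp β * x.1) 1
      rw [I01.clamp_eq hα, I01.clamp_eq hβ, I01.clamp_eq ⟨by linarith [hα.1, hβ.1], hab⟩,
        min_eq_left h1]
      ring
    · rw [I01mv.le_iff, I01mv.star_val]
      show I01.clamp α * x.1 ≤ 1 - I01.clamp β * x.1
      rw [I01.clamp_eq hα, I01.clamp_eq hβ]
      linarith
  mul_smul α β hα hβ x := by
    apply Subtype.ext
    show I01.clamp (α * β) * x.1 = I01.clamp α * (I01.clamp β * x.1)
    rw [I01.clamp_eq hα, I01.clamp_eq hβ,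
      I01.clamp_eq ⟨mul_nonneg hα.1 hβ.1,
        le_trans (mul_le_mul hα.2 hβ.2 hβ.1 (by norm_num)) (by norm_num)⟩]
    ring
  one_smul x := by
    apply Subtype.ext
    show I01.clamp 1 * x.1 = x.1
    rw [I01.clamp_eq (by norm_num : (1:ℝ) ∈ Set.Icc (0:ℝ) 1)]
    ring

namespace I01alg

theorem oplus_val (x y : I01) : (I01alg.oplus x y).1 = min (x.1 + y.1) 1 := rfl
theorem star_val (x : I01) : (I01alg.star x).1 = 1 - x.1 := rfl
theorem zero_val : (I01alg.zero).1 = 0 := rfl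
theorem one_val : (I01alg.toMVAlg.one).1 = 1 := I01mv.one_val
theorem smul_val {α : ℝ} (hα : α ∈ Set.Icc (0:ℝ) 1) (x : I01) :
    (I01alg.smul α x).1 = α * x.1 := by
  show I01.clamp α * x.1 = _
  rw [I01.clamp_eq hα]

theorem le_iff {x y : I01} : I01alg.toMVAlg.le x y ↔ x.1 ≤ y.1 := I01mv.le_iff

theorem ominus_val (x y : I01) : (I01alg.toMVAlg.ominus x y).1 = max (x.1 - y.1) 0 := by
  show (I01alg.star (I01alg.oplus (I01alg.star x) y)).1 = _
  rw [star_val, oplus_val, star_val]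
  rcases le_or_gt (1 - x.1 + y.1) 1 with h1 | h1
  · rw [min_eq_left h1, max_eq_left (by linarith)]; ring
  · rw [min_eq_right (by linarith), max_eq_right (by linarith)]; ring

theorem nsum_val (c : I01) (n : ℕ) : (I01alg.toMVAlg.nsum n c).1 = min ((n:ℝ) * c.1) 1 := by
  induction n with
  | zero =>
      show (I01alg.zero).1 = _
      rw [zero_val, show ((0:ℕ):ℝ) * c.1 = 0 by norm_num, min_eq_left (by norm_num)]
  | succ n ih =>
      show (I01alg.oplus (I01alg.toMVAlg.nsum n c) c).1 = _
      rw [oplus_val, ih]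
      have := c.2.1; have := c.2.2
      have hn : (0:ℝ) ≤ (n:ℝ) * c.1 := mul_nonneg (Nat.cast_nonneg n) c.2.1
      push_cast
      simp only [min_def]; split_ifs <;> nlinarith

/-- Archimedean: positive elements have a multiple equal to 1. -/
theorem archimedean {c : I01} (hc : 0 < c.1) :
    ∃ n : ℕ, I01alg.toMVAlg.nsum n c = I01alg.toMVAlg.one := by
  obtain ⟨n, hn⟩ := exists_nat_ge (1 / c.1)
  refine ⟨n, ?_⟩
  apply Subtype.ext
  rw [nsum_val, one_val]
  rw [div_le_iff₀ hc] at hn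
  rw [min_eq_right (by linarith)]

end I01alg
section Homs
open MVAlg
variable {A : Type u} {B : Type v} {M : MVAlg A} {N : MVAlg B} {f : A → B}

theorem MVHom.oplus' (hf : MVHom M N f) (x y : A) : f (M.oplus x y) = N.oplus (f x) (f y) :=
  hf.1 x y
theorem MVHom.star' (hf : MVHom M N f) (x : A) : f (M.star x) = N.star (f x) := hf.2.1 x
theorem MVHom.zero' (hf : MVHom M N f) : f M.zero = N.zero := hf.2.2
theorem MVHom.one' (hf : MVHom M N f) : f M.one = N.one := by
  show f (M.star M.zero) = N.star N.zero
  rw [hf.star', hf.zero']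
theorem MVHom.le' (hf : MVHom M N f) {x y : A} (h : M.le x y) : N.le (f x) (f y) := by
  unfold MVAlg.le at h ⊢
  rw [← hf.star', ← hf.oplus', h, hf.one']
theorem MVHom.ominus' (hf : MVHom M N f) (x y : A) :
    f (M.ominus x y) = N.ominus (f x) (f y) := by
  unfold MVAlg.ominus
  rw [hf.star', hf.oplus', hf.star']
theorem MVHom.nsum' (hf : MVHom M N f) (x : A) (n : ℕ) :
    f (M.nsum n x) = N.nsum n (f x) := by
  induction n with
  | zero => exact hf.zero'
  | succ n ih =>
      show f (M.oplus (M.nsum n x) x) = N.oplus (N.nsum n (f x)) (f x)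
      rw [hf.oplus', ih]

theorem MVHom.comp {C : Type w} {P : MVAlg C} {g : B → C} (hg : MVHom N P g)
    (hf : MVHom M N f) : MVHom M P (g ∘ f) := by
  refine ⟨fun x y => ?_, fun x => ?_, ?_⟩
  · show g (f (M.oplus x y)) = P.oplus (g (f x)) (g (f y))
    rw [hf.oplus', hg.oplus']
  · show g (f (M.star x)) = P.star (g (f x))
    rw [hf.star', hg.star']
  · show g (f M.zero) = P.zero
    rw [hf.zero', hg.zero']

theorem MVHom.ker_isIdeal (hf : MVHom M N f) : M.IsIdeal {x | f x = N.zero} := by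
  refine ⟨hf.zero', ?_, ?_⟩
  · intro x hx y hy
    show f (M.oplus x y) = N.zero
    rw [hf.oplus', hx, hy, N.oplus_zero]
  · intro x y hxy hy
    have := hf.le' hxy
    rw [hy] at this
    exact le_zero_iff.1 this

end Homs

section RieszHoms
open MVAlg
variable {A : Type u} {B : Type v} {R : RieszMVAlg A} {S : RieszMVAlg B} {f : A → B}

theorem RieszMVHom.comp {C : Type w} {T : RieszMVAlg C} {g : B → C}
    (hg : RieszMVHom S T g) (hf : RieszMVHom R S f) : RieszMVHom R T (g ∘ f) := by
  refine ⟨hg.1.comp hf.1, fun α hα x => ?_⟩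
  show g (f (R.smul α x)) = T.smul α (g (f x))
  rw [hf.2 α hα, hg.2 α hα]

/-- the kernel of a hom into [0,1] is a maximal ideal -/
theorem ker_I01_maximal {g : A → I01} (hg : MVHom R.toMVAlg I01alg.toMVAlg g) :
    R.toMVAlg.IsMaximalIdeal {x | g x = I01alg.zero} := by
  set M := R.toMVAlg
  have hker := hg.ker_isIdeal
  refine ⟨hker, ?_, ?_⟩
  · intro h
    have h1 : M.one ∈ {x | g x = I01alg.zero} := h ▸ Set.mem_univ _
    have h2 : g M.one = I01alg.zero := h1
    rw [hg.one'] at h2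
    have := congrArg Subtype.val h2
    rw [I01alg.one_val, I01alg.zero_val] at this
    norm_num at this
  · intro J hJ hJu hKJ
    refine Set.Subset.antisymm ?_ hKJ
    intro t ht
    by_contra htK
    have hc : 0 < (g t).1 := by
      rcases lt_or_eq_of_le (g t).2.1 with h | h
      · exact h
      · exact absurd (Subtype.ext h.symm) htK
    obtain ⟨n, hn⟩ := I01alg.archimedean hc
    have h1 : M.one ∈ J := by
      have hm : M.ominus M.one (M.nsum n t) ∈ J := by
        apply hKJ
        show g (M.ominus M.one (M.nsum n t)) = I01alg.zero
        rw [hg.ominus', hg.nsum', hn]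
        apply Subtype.ext
        rw [I01alg.ominus_val, I01alg.one_val]
        have := (g M.one).2.2
        rw [max_eq_right (by linarith)]
        exact I01alg.zero_val.symm
      have hnt : M.nsum n t ∈ J := nsum_mem_ideal hJ ht n
      have hsum : M.oplus (M.ominus M.one (M.nsum n t)) (M.nsum n t) ∈ J :=
        hJ.2.1 _ hm _ hnt
      exact mem_of_le_ideal hJ (le_ominus_oplus M.one (M.nsum n t)) hsum
    exact hJu ((ideal_eq_univ_iff hJ).2 h1)

end RieszHoms

section Uniqueness
open MVAlg
variable {A : Type u} {R : RieszMVAlg A}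

theorem riesz_hom_I01_smul_one {g : A → I01} (hg : RieszMVHom R I01alg g)
    {α : ℝ} (hα : α ∈ Set.Icc (0:ℝ) 1) :
    (g (R.smul α R.toMVAlg.one)).1 = α := by
  rw [hg.2 α hα, hg.1.one']
  rw [I01alg.smul_val hα]
  rw [show (I01alg.toMVAlg.one).1 = 1 from I01alg.one_val]
  ring

/-- two Riesz homs into [0,1] with the same kernel are equal -/
theorem riesz_hom_I01_ext {g h : A → I01} (hg : RieszMVHom R I01alg g)
    (hh : RieszMVHom R I01alg h)
    (hker : ∀ x, g x = I01alg.zero ↔ h x = I01alg.zero) : g = h := by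
  set M := R.toMVAlg
  have key : ∀ (g' h' : A → I01), RieszMVHom R I01alg g' → RieszMVHom R I01alg h' →
      (∀ x, g' x = I01alg.zero ↔ h' x = I01alg.zero) →
      ∀ z, ¬ ((g' z).1 < (h' z).1) := by
    intro g' h' hg' hh' hker' z hlt
    set α := ((g' z).1 + (h' z).1) / 2 with hαdef
    have h0 := (g' z).2.1
    have h1 := (h' z).2.2
    have hα : α ∈ Set.Icc (0:ℝ) 1 := ⟨by simp only [hαdef]; linarith, by
      simp only [hαdef]; linarith⟩
    set w := M.ominus z (R.smul α M.one) with hw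
    have hgw : g' w = I01alg.zero := by
      apply Subtype.ext
      rw [hw, hg'.1.ominus', I01alg.ominus_val, I01alg.zero_val,
        riesz_hom_I01_smul_one hg' hα]
      rw [max_eq_right (by simp only [hαdef]; linarith)]
    have hhw : h' w ≠ I01alg.zero := by
      intro hcon
      have := congrArg Subtype.val hcon
      rw [hw, hh'.1.ominus', I01alg.ominus_val, I01alg.zero_val,
        riesz_hom_I01_smul_one hh' hα] at this
      rw [max_eq_left (by simp only [hαdef]; linarith)] at this
      simp only [hαdef] at this
      linarith
    exact hhw ((hker' w).1 hgw)
  funext z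
  apply Subtype.ext
  rcases lt_trichotomy (g z).1 (h z).1 with hcmp | hcmp | hcmp
  · exact absurd hcmp (key g h hg hh hker z)
  · exact hcmp
  · exact absurd hcmp (key h g hh hg (fun x => (hker x).symm) z)

end Uniqueness
/-! Hölder: a maximal ideal of a Riesz MV-algebra induces a hom into [0,1]. -/
namespace Holder
open MVAlg RieszMVAlg

variable {A : Type u} (R : RieszMVAlg A) (M : Set A)

/-- order modulo the ideal M -/
def mle (x y : A) : Prop := R.toMVAlg.ominus x y ∈ M

variable {R M}
variable (hM : R.toMVAlg.IsMaximalIdeal M)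

section mleLemmas
include hM

theorem mle_of_le {x y : A} (h : R.toMVAlg.le x y) : mle R M x y := by
  unfold mle
  rw [ominus_eq_zero_iff.2 h]
  exact hM.1.1

theorem mle_refl (x : A) : mle R M x x := mle_of_le hM (MVAlg.le_refl x)

theorem mle_trans {x y z : A} (h1 : mle R M x y) (h2 : mle R M y z) : mle R M x z := by
  refine mem_of_le_ideal hM.1 (ominus_triangle x y z) ?_
  exact hM.1.2.1 _ h1 _ h2

theorem mle_total (x y : A) : mle R M x y ∨ mle R M y x := maximal_prime hM x y

theorem mle_oplus {x y z w : A} (h1 : mle R M x y) (h2 : mle R M z w) :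
    mle R M (R.toMVAlg.oplus x z) (R.toMVAlg.oplus y w) := by
  set N := R.toMVAlg
  have s1 : mle R M (N.oplus x z) (N.oplus y z) :=
    mem_of_le_ideal hM.1 (oplus_ominus_oplus_le x y z) h1
  have s2 : mle R M (N.oplus y z) (N.oplus y w) := by
    refine mem_of_le_ideal hM.1 ?_ h2
    rw [N.oplus_comm y z, N.oplus_comm y w]
    exact oplus_ominus_oplus_le z w y
  exact mle_trans hM s1 s2

theorem mle_smul {α : ℝ} (hα : α ∈ Set.Icc (0:ℝ) 1) {x y : A} (h : mle R M x y) :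
    mle R M (R.smul α x) (R.smul α y) := by
  refine mem_of_le_ideal hM.1 (smul_ominus_le R hα x y) ?_
  exact ideal_smul_mem R hM.1 h hα

theorem mem_of_mle_mem {x y : A} (h : mle R M x y) (hy : y ∈ M) : x ∈ M := by
  refine mem_of_le_ideal hM.1 (le_ominus_oplus x y) ?_
  exact hM.1.2.1 _ h _ hy

theorem mle_nsum {x y : A} (h : mle R M x y) (n : ℕ) :
    mle R M (R.toMVAlg.nsum n x) (R.toMVAlg.nsum n y) := by
  induction n with
  | zero => exact mle_refl hM _
  | succ n ih => exact mle_oplus hM ih h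

/-- strict comparison of scalar multiples of 1 -/
theorem mle_smul_one_absurd {β γ : ℝ} (hγ : 0 ≤ γ) (hlt : γ < β) (hβ : β ≤ 1)
    (h : mle R M (R.smul β R.toMVAlg.one) (R.smul γ R.toMVAlg.one)) : False := by
  unfold mle at h
  rw [smul_one_ominus R hγ (le_of_lt hlt) hβ] at h
  exact smul_one_notMem R hM.1 (oneNotMem_of_maximal hM)
    ⟨by linarith, by linarith⟩ (by linarith) h

end mleLemmas

/-- the set of lower scalar bounds -/
def Sx (R : RieszMVAlg A) (M : Set A) (x : A) : Set ℝ :=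
  {α : ℝ | 0 ≤ α ∧ α ≤ 1 ∧ mle R M (R.smul α R.toMVAlg.one) x}

/-- the Hölder functional -/
noncomputable def hfun (R : RieszMVAlg A) (M : Set A) (x : A) : ℝ := sSup (Sx R M x)

section hfunLemmas
include hM

theorem zero_mem_Sx (x : A) : (0:ℝ) ∈ Sx R M x := by
  refine ⟨le_refl 0, by norm_num, ?_⟩
  rw [smul_zero']
  exact mle_of_le hM (zero_le x)

theorem Sx_nonempty (x : A) : (Sx R M x).Nonempty := ⟨0, zero_mem_Sx hM x⟩

theorem Sx_bdd (x : A) : BddAbove (Sx R M x) := ⟨1, fun α hα => hα.2.1⟩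

theorem Sx_down {x : A} {α β : ℝ} (hα : α ∈ Sx R M x) (h0 : 0 ≤ β) (hβα : β ≤ α) :
    β ∈ Sx R M x := by
  refine ⟨h0, le_trans hβα hα.2.1, ?_⟩
  refine mle_trans hM ?_ hα.2.2
  exact mle_of_le hM (smul_mono_scalar R h0 hβα hα.2.1 _)

theorem hfun_nonneg (x : A) : 0 ≤ hfun R M x := le_csSup (Sx_bdd hM x) (zero_mem_Sx hM x)
theorem hfun_le_one (x : A) : hfun R M x ≤ 1 := csSup_le (Sx_nonempty hM x) fun α hα => hα.2.1

theorem mem_Sx_of_lt {x : A} {β : ℝ} (h0 : 0 ≤ β) (hβ : β < hfun R M x) : β ∈ Sx R M x := by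
  obtain ⟨γ, hγS, hγ⟩ := exists_lt_of_lt_csSup (Sx_nonempty hM x) hβ
  exact Sx_down hM hγS h0 (le_of_lt hγ)

theorem mle_of_gt {x : A} {α : ℝ} (hα1 : α ≤ 1) (h : hfun R M x < α) :
    mle R M x (R.smul α R.toMVAlg.one) := by
  rcases mle_total hM x (R.smul α R.toMVAlg.one) with h1 | h1
  · exact h1
  · exfalso
    have hmem : α ∈ Sx R M x := ⟨le_trans (hfun_nonneg hM x) (le_of_lt h), hα1, h1⟩
    exact absurd (le_csSup (Sx_bdd hM x) hmem) (not_le.2 h)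

theorem hfun_zero_of_mem {x : A} (hx : x ∈ M) : hfun R M x = 0 := by
  refine le_antisymm ?_ (hfun_nonneg hM x)
  refine csSup_le (Sx_nonempty hM x) fun α hα => ?_
  by_contra hpos
  push_neg at hpos
  have h1 : R.smul α R.toMVAlg.one ∈ M := mem_of_mle_mem hM hα.2.2 hx
  exact smul_one_notMem R hM.1 (oneNotMem_of_maximal hM) ⟨hα.1, hα.2.1⟩ hpos h1

theorem mem_of_hfun_zero {x : A} (hx : hfun R M x = 0) : x ∈ M := by
  by_contra hxM
  obtain ⟨n, hn⟩ := maximal_archimedean hM hxM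
  set N := R.toMVAlg
  -- 1 ≼ n·x
  have h1 : mle R M N.one (N.nsum n x) := by
    unfold mle
    unfold MVAlg.ominus
    rw [show N.star N.one = N.zero from star_one, zero_oplus]
    exact hn
  -- n ≥ 1
  rcases Nat.eq_zero_or_pos n with rfl | hnpos
  · -- nsum 0 x = 0, so 1 ≼ 0 means 1* = ... star zero... h1 : star (nsum 0 x) ... 
    have h2 : N.one ∈ M := by
      refine mem_of_mle_mem hM h1 ?_
      exact hM.1.1
    exact oneNotMem_of_maximal hM h2
  · set α : ℝ := 1 / (2 * n) with hαdef
    have hn1 : (1:ℝ) ≤ (n:ℝ) := by exact_mod_cast hnpos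
    have hα0 : 0 < α := by positivity
    have hα1 : α ≤ 1 := by
      rw [hαdef, div_le_one (by positivity)]
      linarith
    -- x ≼ α·1
    have h2 : mle R M x (R.smul α N.one) := mle_of_gt hM hα1 (hx ▸ hα0)
    -- n·x ≼ n·(α·1) ≤ (nα)·1 = (1/2)·1
    have h3 : mle R M (N.nsum n x) (N.nsum n (R.smul α N.one)) := mle_nsum hM h2 n
    have h4 : N.le (N.nsum n (R.smul α N.one)) (R.smul (min ((n:ℝ)*α) 1) N.one) :=
      nsum_smul_one_le R ⟨le_of_lt hα0, hα1⟩ n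
    have hna : (n:ℝ) * α = 1/2 := by
      rw [hαdef]; field_simp
    have h5 : mle R M N.one (R.smul (1/2 : ℝ) N.one) := by
      refine mle_trans hM h1 (mle_trans hM h3 (mle_of_le hM ?_))
      rw [hna, min_eq_left (by norm_num)] at h4
      exact h4
    have h6 : mle R M (R.smul 1 N.one) (R.smul (1/2 : ℝ) N.one) := by
      rw [R.one_smul]; exact h5
    exact mle_smul_one_absurd hM (by norm_num) (by norm_num) (by norm_num) h6

/-- helper: t ≤ sSup S when all c < t in [0,t) belong -/
theorem le_hfun_of (x : A) {t : ℝ} (ht : t ≤ 1)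
    (h : ∀ c, 0 ≤ c → c < t → c ∈ Sx R M x) : t ≤ hfun R M x := by
  by_contra hc
  push_neg at hc
  set c := (hfun R M x + t) / 2 with hcdef
  have h0 : 0 ≤ c := by
    have := hfun_nonneg hM x
    rw [hcdef]; linarith
  have h1 : c < t := by rw [hcdef]; linarith
  have h2 : hfun R M x < c := by rw [hcdef]; linarith
  exact absurd (le_csSup (Sx_bdd hM x) (h c h0 h1)) (not_le.2 h2)

theorem hfun_star (x : A) : hfun R M (R.toMVAlg.star x) = 1 - hfun R M x := by
  set N := R.toMVAlg
  -- key: the defining conditions are literally equal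
  have key : ∀ β : ℝ, β ∈ Set.Icc (0:ℝ) 1 →
      (mle R M (R.smul β N.one) (N.star x) ↔ mle R M x (R.smul (1-β) N.one)) := by
    intro β hβ
    unfold mle
    have e1 : N.ominus (R.smul β N.one) (N.star x) = N.odot (R.smul β N.one) x := by
      rw [ominus_def, N.star_star]
    have e2 : N.ominus x (R.smul (1-β) N.one) = N.odot (R.smul β N.one) x := by
      rw [ominus_def]
      rw [show N.star (R.smul (1-β) N.one) = R.smul (1-(1-β)) N.one from
        smul_one_star R ⟨by linarith [hβ.2], by linarith [hβ.1]⟩]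
      rw [show (1:ℝ)-(1-β) = β by ring, odot_comm]
    rw [e1, e2]
  refine _root_.le_antisymm ?_ ?_
  · -- hfun x* ≤ 1 - hfun x
    refine csSup_le (Sx_nonempty hM _) fun α hα => ?_
    have h1 : hfun R M x ≤ 1 - α := by
      refine csSup_le (Sx_nonempty hM _) fun β hβ => ?_
      by_contra hb
      push_neg at hb
      -- β > 1 - α : mle (β·1) x and x ≼ (1-α)·1
      have h2 : mle R M x (R.smul (1-α) N.one) := (key α ⟨hα.1, hα.2.1⟩).1 hα.2.2
      have h3 : mle R M (R.smul β N.one) (R.smul (1-α) N.one) :=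
        mle_trans hM hβ.2.2 h2
      exact mle_smul_one_absurd hM (by linarith [hα.2.1]) hb hβ.2.1 h3
    linarith
  · -- 1 - hfun x ≤ hfun x*
    refine le_hfun_of hM _ (by linarith [hfun_nonneg hM x]) fun c h0 hc => ?_
    refine ⟨h0, by linarith [hfun_nonneg hM x], ?_⟩
    refine (key c ⟨h0, by linarith [hfun_nonneg hM x]⟩).2 ?_
    refine mle_of_gt hM (by linarith) (by linarith)

theorem hfun_oplus (x y : A) :
    hfun R M (R.toMVAlg.oplus x y) = min (hfun R M x + hfun R M y) 1 := by
  set N := R.toMVAlg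
  set hx := hfun R M x with hhx
  set hy := hfun R M y with hhy
  have hx0 := hfun_nonneg hM x
  have hy0 := hfun_nonneg hM y
  have hx1 := hfun_le_one hM x
  have hy1 := hfun_le_one hM y
  refine _root_.le_antisymm ?_ ?_
  · refine csSup_le (Sx_nonempty hM _) fun c hc => ?_
    rcases le_or_gt 1 (hx + hy) with hcase | hcase
    · rw [min_eq_right hcase]; exact hc.2.1
    · rw [min_eq_left (le_of_lt hcase)]
      by_contra hb
      push_neg at hb
      set ε := (c - hx - hy) / 3 with hεdef
      have hε : 0 < ε := by rw [hεdef]; linarith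
      set γ := hx + ε with hγdef
      set δ := hy + ε with hδdef
      have hc1 : c ≤ 1 := hc.2.1
      have hγδ : γ + δ ≤ 1 := by rw [hγdef, hδdef, hεdef]; linarith
      have h1 : mle R M x (R.smul γ N.one) :=
        mle_of_gt hM (by rw [hγdef] at hγδ ⊢; linarith) (by rw [hγdef]; linarith)
      have h2 : mle R M y (R.smul δ N.one) :=
        mle_of_gt hM (by rw [hδdef] at hγδ ⊢; linarith) (by rw [hδdef]; linarith)
      have h3 := mle_oplus hM h1 h2
      rw [smul_one_oplus_of_le R ⟨by linarith, by linarith⟩ ⟨by linarith, by linarith⟩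
        hγδ] at h3
      have h5 : mle R M (R.smul c N.one) (R.smul (γ + δ) N.one) :=
        mle_trans hM hc.2.2 h3
      have hlt : γ + δ < c := by rw [hγdef, hδdef, hεdef]; linarith
      exact mle_smul_one_absurd hM (by linarith) hlt hc1 h5
  · refine le_hfun_of hM _ (min_le_right _ _) fun c h0 hc => ?_
    have hc2 : c < hx + hy := lt_of_lt_of_le hc (min_le_left _ _)
    have hc1 : c < 1 := lt_of_lt_of_le hc (min_le_right _ _)
    set ε := (hx + hy - c) / 2 with hεdef
    have hε : 0 < ε := by rw [hεdef]; linarith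
    have hmemx : max (hx - ε) 0 ∈ Sx R M x := by
      rcases le_or_gt (hx - ε) 0 with h | h
      · rw [max_eq_right h]; exact zero_mem_Sx hM x
      · rw [max_eq_left (le_of_lt h)]
        exact mem_Sx_of_lt hM (le_of_lt h) (by linarith)
    have hmemy : max (hy - ε) 0 ∈ Sx R M y := by
      rcases le_or_gt (hy - ε) 0 with h | h
      · rw [max_eq_right h]; exact zero_mem_Sx hM y
      · rw [max_eq_left (le_of_lt h)]
        exact mem_Sx_of_lt hM (le_of_lt h) (by linarith)
    set α := max (hx - ε) 0 with hαdef
    set β := max (hy - ε) 0 with hβdef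
    have hcαβ : c ≤ α + β := by
      have h1 : hx - ε ≤ α := le_max_left _ _
      have h2 : hy - ε ≤ β := le_max_left _ _
      rw [hεdef] at h1 h2
      linarith
    have m1 : mle R M (N.oplus (R.smul α N.one) (R.smul β N.one)) (N.oplus x y) :=
      mle_oplus hM hmemx.2.2 hmemy.2.2
    rcases le_or_gt (α + β) 1 with hsum | hsum
    · rw [smul_one_oplus_of_le R ⟨hmemx.1, hmemx.2.1⟩ ⟨hmemy.1, hmemy.2.1⟩ hsum] at m1
      exact Sx_down hM ⟨by linarith [hmemx.1, hmemy.1], hsum, m1⟩ h0 hcαβ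
    · rw [smul_one_oplus_of_ge R ⟨hmemx.1, hmemx.2.1⟩ ⟨hmemy.1, hmemy.2.1⟩
        (le_of_lt hsum)] at m1
      have hone : (1:ℝ) ∈ Sx R M (N.oplus x y) := by
        refine ⟨by norm_num, le_refl 1, ?_⟩
        rw [R.one_smul]
        exact m1
      exact Sx_down hM hone h0 (le_of_lt hc1)

theorem hfun_smul {α : ℝ} (hα : α ∈ Set.Icc (0:ℝ) 1) (x : A) :
    hfun R M (R.smul α x) = α * hfun R M x := by
  set N := R.toMVAlg
  set hx := hfun R M x with hhx
  have hx0 := hfun_nonneg hM x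
  have hx1 := hfun_le_one hM x
  rcases eq_or_lt_of_le hα.1 with rfl | hαpos
  · rw [smul_zero', zero_mul]
    exact hfun_zero_of_mem hM hM.1.1
  refine _root_.le_antisymm ?_ ?_
  · -- hfun(αx) ≤ α hx
    refine csSup_le (Sx_nonempty hM _) fun c hc => ?_
    -- first: c ≤ α γ for every γ ∈ (hx, 1]
    have step : ∀ γ : ℝ, hx < γ → γ ≤ 1 → c ≤ α * γ := by
      intro γ hγ1 hγ2
      by_contra hb
      push_neg at hb
      have h1 : mle R M x (R.smul γ N.one) := mle_of_gt hM hγ2 hγ1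
      have h2 : mle R M (R.smul α x) (R.smul α (R.smul γ N.one)) := mle_smul hM hα h1
      rw [← R.mul_smul α γ hα ⟨by linarith [hx0], hγ2⟩] at h2
      have h3 : mle R M (R.smul c N.one) (R.smul (α * γ) N.one) :=
        mle_trans hM hc.2.2 h2
      exact mle_smul_one_absurd hM (mul_nonneg hα.1 (by linarith)) hb hc.2.1 h3
    rcases eq_or_lt_of_le hx1 with hxeq | hxlt
    · -- hx = 1 : αx ≤ α·1
      rw [hhx, hxeq, mul_one]
      have h1 : N.le (R.smul α x) (R.smul α N.one) := smul_mono_vec R hα (le_one x)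
      have h2 : mle R M (R.smul c N.one) (R.smul α N.one) :=
        mle_trans hM hc.2.2 (mle_of_le hM h1)
      by_contra hb
      push_neg at hb
      exact mle_smul_one_absurd hM hα.1 hb hc.2.1 h2
    · by_contra hb
      push_neg at hb
      set γ := min 1 (hx + (c - α * hx) / (2 * α)) with hγdef
      have hα0 : 0 < α := hαpos
      have hfrac : 0 < (c - α * hx) / (2 * α) := div_pos (by linarith) (by linarith)
      have hγgt : hx < γ := by
        rw [hγdef]
        exact lt_min hxlt (by linarith)
      have hγle : γ ≤ 1 := by rw [hγdef]; exact min_le_left _ _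
      have := step γ hγgt hγle
      have hγub : γ ≤ hx + (c - α * hx) / (2 * α) := by
        rw [hγdef]; exact min_le_right _ _
      have h2 : α * γ ≤ α * hx + (c - α * hx) / 2 := by
        have := mul_le_mul_of_nonneg_left hγub (le_of_lt hα0)
        calc α * γ ≤ α * (hx + (c - α * hx) / (2 * α)) := this
          _ = α * hx + (c - α * hx) / 2 := by field_simp
      linarith
  · -- α hx ≤ hfun(αx)
    refine le_hfun_of hM _ (by nlinarith [hα.2]) fun c h0 hc => ?_
    -- c < α hx ; take β := c/α < hx
    have hα0 : 0 < α := hαpos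
    have hβlt : c / α < hx := by rwa [div_lt_iff₀ hα0, mul_comm]
    have hβ0 : 0 ≤ c / α := div_nonneg h0 (le_of_lt hα0)
    have hmem := mem_Sx_of_lt hM hβ0 hβlt
    have h1 : mle R M (R.smul (c/α) N.one) x := hmem.2.2
    have h2 := mle_smul hM hα h1
    rw [← R.mul_smul α (c/α) hα ⟨hβ0, by linarith⟩] at h2
    rw [show α * (c / α) = c by field_simp] at h2
    exact ⟨h0, by nlinarith [hα.2, hfun_le_one hM x], h2⟩

end hfunLemmas

section packaged
/-- The packaged hom into [0,1]. -/
noncomputable def hph (hM : R.toMVAlg.IsMaximalIdeal M) (x : A) : I01 :=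
  ⟨hfun R M x, hfun_nonneg hM x, hfun_le_one hM x⟩

theorem hph_hom (hM : R.toMVAlg.IsMaximalIdeal M) : RieszMVHom R I01alg (hph hM) := by
  refine ⟨⟨fun x y => ?_, fun x => ?_, ?_⟩, fun α hα x => ?_⟩
  · apply Subtype.ext
    rw [I01alg.oplus_val]
    show hfun R M (R.toMVAlg.oplus x y) = min (hfun R M x + hfun R M y) 1
    exact hfun_oplus hM x y
  · apply Subtype.ext
    rw [I01alg.star_val]
    show hfun R M (R.toMVAlg.star x) = 1 - hfun R M x
    exact hfun_star hM x
  · apply Subtype.ext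
    rw [I01alg.zero_val]
    exact hfun_zero_of_mem hM hM.1.1
  · apply Subtype.ext
    rw [I01alg.smul_val hα]
    exact hfun_smul hM hα x

theorem hph_ker (hM : R.toMVAlg.IsMaximalIdeal M) (x : A) :
    hph hM x = I01alg.zero ↔ x ∈ M := by
  constructor
  · intro h
    have := congrArg Subtype.val h
    rw [I01alg.zero_val] at this
    exact mem_of_hfun_zero hM this
  · intro h
    apply Subtype.ext
    rw [I01alg.zero_val]
    exact hfun_zero_of_mem hM h

end packaged

/-- main existence theorem: each maximal ideal is the kernel of a hom into [0,1] -/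
theorem exists_hom_of_maximal {A : Type u} {R : RieszMVAlg A} {M : Set A}
    (hM : R.toMVAlg.IsMaximalIdeal M) :
    ∃ g : A → I01, RieszMVHom R I01alg g ∧ ∀ x, (g x = I01alg.zero ↔ x ∈ M) :=
  ⟨hph hM, hph_hom hM, hph_ker hM⟩

end Holder
/-! Pointwise function algebras. -/
section Pointwise
open MVAlg

variable (S : Type u) {C : Type v}

def funMV (N : MVAlg C) : MVAlg (S → C) where
  oplus f g := fun s => N.oplus (f s) (g s)
  star f := fun s => N.star (f s)
  zero := fun _ => N.zero
  oplus_comm f g := funext fun s => N.oplus_comm (f s) (g s)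
  oplus_assoc f g h := funext fun s => N.oplus_assoc (f s) (g s) (h s)
  oplus_zero f := funext fun s => N.oplus_zero (f s)
  star_star f := funext fun s => N.star_star (f s)
  oplus_one f := funext fun s => N.oplus_one (f s)
  luk f g := funext fun s => N.luk (f s) (g s)

theorem funMV_one (N : MVAlg C) : (funMV S N).one = fun _ => N.one := rfl

theorem funMV_le_iff {N : MVAlg C} {f g : S → C} :
    (funMV S N).le f g ↔ ∀ s, N.le (f s) (g s) := by
  unfold MVAlg.le
  constructor
  · intro h s
    exact congrFun h s
  · intro h
    funext s
    exact h s

noncomputable def funAlg (R : RieszMVAlg C) : RieszMVAlg (S → C) where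
  toMVAlg := funMV S R.toMVAlg
  smul α f := fun s => R.smul α (f s)
  smul_oplus α hα f g h := funext fun s =>
    R.smul_oplus α hα (f s) (g s) ((funMV_le_iff S).1 h s)
  add_smul α β hα hβ hab f := by
    constructor
    · exact funext fun s => (R.add_smul α β hα hβ hab (f s)).1
    · exact (funMV_le_iff S).2 fun s => (R.add_smul α β hα hβ hab (f s)).2
  mul_smul α β hα hβ f := funext fun s => R.mul_smul α β hα hβ (f s)
  one_smul f := funext fun s => R.one_smul (f s)

/-- evaluation at a point is an MV-homomorphism -/
theorem eval_MVHom (N : MVAlg C) (s : S) :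
    MVHom (funMV S N) N (fun f => f s) := ⟨fun _ _ => rfl, fun _ => rfl, rfl⟩

/-- the pointwise algebra of [0,1]-valued functions is semisimple -/
theorem funAlg_semisimple : (funAlg S I01alg).Semisimple := by
  unfold RieszMVAlg.Semisimple MVAlg.Semisimple
  ext f
  simp only [Set.mem_setOf_eq, Set.mem_singleton_iff]
  constructor
  · intro h
    funext s
    have hset := ker_I01_maximal (R := funAlg S I01alg)
      (g := fun f => f s) (eval_MVHom S I01alg.toMVAlg s)
    exact h _ hset
  · rintro rfl I hI
    exact hI.1.1
end Pointwise
/-! Extension theorem and the amalgamation. -/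
section Extension
open MVAlg

/-- every hom Z → [0,1] extends along an embedding Z ↪ B -/
theorem extension_hom {Z : Type u} {B : Type v} {ZR : RieszMVAlg Z} {BR : RieszMVAlg B}
    {h : Z → B} (hh : RieszMVHom ZR BR h) (hinj : Function.Injective h)
    {g : Z → I01} (hg : RieszMVHom ZR I01alg g) :
    ∃ q : B → I01, RieszMVHom BR I01alg q ∧ q ∘ h = g := by
  set K : Set Z := {z | g z = I01alg.zero} with hK
  have hKmax : ZR.toMVAlg.IsMaximalIdeal K := ker_I01_maximal hg.1
  -- the ideal of B generated by h(K)
  set I0 : Set B := {t | ∃ z, g z = I01alg.zero ∧ BR.toMVAlg.le t (h z)} with hI0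
  have hI0ideal : BR.toMVAlg.IsIdeal I0 := by
    refine ⟨⟨ZR.toMVAlg.zero, hg.1.zero', zero_le _⟩, ?_, ?_⟩
    · rintro t1 ⟨z1, hz1, ht1⟩ t2 ⟨z2, hz2, ht2⟩
      refine ⟨ZR.toMVAlg.oplus z1 z2, ?_, ?_⟩
      · show g (ZR.toMVAlg.oplus z1 z2) = I01alg.zero
        rw [hg.1.oplus', hz1, hz2]
        exact I01alg.toMVAlg.oplus_zero _
      · rw [hh.1.oplus']
        exact oplus_le_oplus ht1 ht2
    · rintro x y hxy ⟨z, hz, hy⟩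
      exact ⟨z, hz, le_trans hxy hy⟩
  have hI0proper : BR.toMVAlg.one ∉ I0 := by
    rintro ⟨z, hz, hle⟩
    have h1 : h z = BR.toMVAlg.one := le_antisymm (le_one _) hle
    rw [← hh.1.one'] at h1
    have h2 : z = ZR.toMVAlg.one := hinj h1
    rw [h2, hg.1.one'] at hz
    have := congrArg Subtype.val hz
    rw [I01alg.one_val, I01alg.zero_val] at this
    norm_num at this
  obtain ⟨MB, hMBsub, hMBmax⟩ := exists_maximal_ideal hI0ideal hI0proper
  obtain ⟨q, hq, hqker⟩ := Holder.exists_hom_of_maximal hMBmax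
  refine ⟨q, hq, ?_⟩
  -- kernels of q∘h and g agree
  have hcomp : RieszMVHom ZR I01alg (q ∘ h) := hq.comp hh
  set K' : Set Z := {z | q (h z) = I01alg.zero} with hK'
  have hKK' : K ⊆ K' := by
    intro z hz
    show q (h z) = I01alg.zero
    rw [hqker]
    exact hMBsub ⟨z, hz, MVAlg.le_refl _⟩
  have hK'max : ZR.toMVAlg.IsMaximalIdeal K' := ker_I01_maximal (R := ZR) hcomp.1
  have hK'K : K' = K := by
    refine hKmax.2.2 K' hK'max.1 hK'max.2.1 hKK'
  refine riesz_hom_I01_ext hcomp hg fun z => ?_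
  constructor
  · intro hz
    have : z ∈ K' := hz
    rw [hK'K] at this
    exact this
  · intro hz
    have : z ∈ K := hz
    rw [← hK'K] at this
    exact this

/-- semisimplicity gives separating maximal ideals -/
theorem semisimple_sep {A : Type u} {R : RieszMVAlg A} (hA : R.Semisimple) {d : A}
    (hd : d ≠ R.toMVAlg.zero) : ∃ M, R.toMVAlg.IsMaximalIdeal M ∧ d ∉ M := by
  by_contra hcon
  push_neg at hcon
  have h1 : d ∈ {x | ∀ I, R.toMVAlg.IsMaximalIdeal I → x ∈ I} := fun I hI => hcon I hI
  rw [show {x | ∀ I, R.toMVAlg.IsMaximalIdeal I → x ∈ I} = {R.toMVAlg.zero} from hA] at h1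
  exact hd h1

end Extension
/-- semisimple Riesz MV-algebras have the amalgamation property. -/
theorem stmt11 {ZC AC BC : Type u}
    (Z : RieszMVAlg ZC) (A : RieszMVAlg AC) (B : RieszMVAlg BC)
    (hZ : Z.Semisimple) (hA : A.Semisimple) (hB : B.Semisimple)
    (zA : ZC → AC) (zB : ZC → BC)
    (hzA : RieszMVHom Z A zA) (hzB : RieszMVHom Z B zB)
    (hiA : Function.Injective zA) (hiB : Function.Injective zB) :
    ∃ (EC : Type u) (E : RieszMVAlg EC) (fA : AC → EC) (fB : BC → EC),
      E.Semisimple ∧ RieszMVHom A E fA ∧ RieszMVHom B E fB ∧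
      Function.Injective fA ∧ Function.Injective fB ∧ fA ∘ zA = fB ∘ zB := by
  classical
  set S : Type u := {pq : (AC → I01) × (BC → I01) //
    RieszMVHom A I01alg pq.1 ∧ RieszMVHom B I01alg pq.2 ∧ pq.1 ∘ zA = pq.2 ∘ zB} with hS
  -- a point of S from a maximal ideal of A avoiding a given nonzero element
  have mkA : ∀ {d : AC}, d ≠ A.toMVAlg.zero → ∃ s : S, s.1.1 d ≠ I01alg.zero := by
    intro d hd
    obtain ⟨MA, hMA, hdM⟩ := semisimple_sep hA hd
    obtain ⟨p, hp, hpker⟩ := Holder.exists_hom_of_maximal hMA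
    obtain ⟨q, hq, hqz⟩ := extension_hom hzB hiB (hp.comp hzA)
    refine ⟨⟨(p, q), hp, hq, hqz.symm⟩, ?_⟩
    intro h0
    exact hdM ((hpker d).1 h0)
  have mkB : ∀ {d : BC}, d ≠ B.toMVAlg.zero → ∃ s : S, s.1.2 d ≠ I01alg.zero := by
    intro d hd
    obtain ⟨MB, hMB, hdM⟩ := semisimple_sep hB hd
    obtain ⟨q, hq, hqker⟩ := Holder.exists_hom_of_maximal hMB
    obtain ⟨p, hp, hpz⟩ := extension_hom hzA hiA (hq.comp hzB)
    refine ⟨⟨(p, q), hp, hq, hpz⟩, ?_⟩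
    intro h0
    exact hdM ((hqker d).1 h0)
  -- nonzero separator from inequality
  have sep_ne : ∀ {CC : Type u} (R : RieszMVAlg CC) {a a' : CC}, a ≠ a' →
      R.toMVAlg.oplus (R.toMVAlg.ominus a a') (R.toMVAlg.ominus a' a) ≠ R.toMVAlg.zero := by
    intro CC R a a' hne h0
    have h1 : R.toMVAlg.ominus a a' = R.toMVAlg.zero := MVAlg.oplus_eq_zero h0
    have h2 : R.toMVAlg.ominus a' a = R.toMVAlg.zero := by
      rw [R.toMVAlg.oplus_comm] at h0
      exact MVAlg.oplus_eq_zero h0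
    exact hne (MVAlg.le_antisymm (MVAlg.ominus_eq_zero_iff.1 h1)
      (MVAlg.ominus_eq_zero_iff.1 h2))
  -- a hom to I01 kills the separator iff it identifies the points
  have hom_killer : ∀ {CC : Type u} (R : RieszMVAlg CC) (g : CC → I01)
      (hg : RieszMVHom R I01alg g) (a a' : CC), g a = g a' →
      g (R.toMVAlg.oplus (R.toMVAlg.ominus a a') (R.toMVAlg.ominus a' a)) = I01alg.zero := by
    intro CC R g hg a a' heq
    rw [hg.1.oplus', hg.1.ominus', hg.1.ominus', heq]
    rw [MVAlg.ominus_eq_zero_iff.2 (MVAlg.le_refl _)]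
    exact I01alg.toMVAlg.oplus_zero _
  refine ⟨S → I01, funAlg S I01alg, (fun a s => s.1.1 a), (fun b s => s.1.2 b),
    funAlg_semisimple S, ?_, ?_, ?_, ?_, ?_⟩
  · exact ⟨⟨fun x y => funext fun s => s.2.1.1.1 x y,
      fun x => funext fun s => s.2.1.1.2.1 x,
      funext fun s => s.2.1.1.2.2⟩,
      fun α hα x => funext fun s => s.2.1.2 α hα x⟩
  · exact ⟨⟨fun x y => funext fun s => s.2.2.1.1.1 x y,
      fun x => funext fun s => s.2.2.1.1.2.1 x,
      funext fun s => s.2.2.1.1.2.2⟩,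
      fun α hα x => funext fun s => s.2.2.1.2 α hα x⟩
  · intro a a' h
    by_contra hne
    obtain ⟨s, hs⟩ := mkA (sep_ne A hne)
    exact hs (hom_killer A s.1.1 s.2.1 a a' (congrFun h s))
  · intro b b' h
    by_contra hne
    obtain ⟨s, hs⟩ := mkB (sep_ne B hne)
    exact hs (hom_killer B s.1.2 s.2.2.1 b b' (congrFun h s))
  · funext z
    funext s
    exact congrFun s.2.2.2 z
end

section
/- For every Archimedean ℓu-group (G, u) there exist a unital Archimedean ℓu-ring R and an injective ℓu-group morphism ε : (G, u) → (R, 1) (a group homomorphism preserving ∨ and ∧ with ε(u) = 1) such that for every unital Archimedean ℓu-ring T and every ℓu-group morphism f : (G, u) → (T, 1) there exists a unital ℓu-ring morphism g : R → T with g ∘ ε = f. -/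
universe u

/-- An Archimedean-free bundled ℓu-group: an abelian ℓ-group with monotone addition
and a distinguished strong unit `u`. -/
structure LuGroup : Type (u + 1) where
  G : Type u
  [grp : AddCommGroup G]
  [lat : Lattice G]
  add_le_add : ∀ a b c : G, a ≤ b → c + a ≤ c + b
  u : G
  u_nonneg : 0 ≤ u
  u_strong : ∀ x : G, ∃ n : ℕ, x ≤ n • u

attribute [instance] LuGroup.grp LuGroup.lat

/-- Archimedean ℓ-group. -/
def LuGroup.Arch (L : LuGroup.{u}) : Prop :=
  ∀ x y : L.G, (∀ n : ℕ, n • x ≤ y) → x ≤ 0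

/-- A unital ℓu-ring: a commutative ring with lattice order, monotone addition,
`1` a strong unit, product of positives positive, and the f-ring condition. -/
structure LuRing : Type (u + 1) where
  R : Type u
  [ring : CommRing R]
  [lat : Lattice R]
  add_le_add : ∀ a b c : R, a ≤ b → c + a ≤ c + b
  one_nonneg : (0 : R) ≤ 1
  one_strong : ∀ x : R, ∃ n : ℕ, x ≤ n • (1 : R)
  mul_nonneg : ∀ a b : R, 0 ≤ a → 0 ≤ b → 0 ≤ a * b
  f_ring : ∀ x y z : R, x ⊓ y = 0 → 0 ≤ z → (z * x) ⊓ y = 0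

attribute [instance] LuRing.ring LuRing.lat

/-- Archimedean ℓu-ring. -/
def LuRing.Arch (S : LuRing.{u}) : Prop :=
  ∀ x y : S.R, (∀ n : ℕ, n • x ≤ y) → x ≤ 0

/-- A morphism of unital ℓu-rings: a ring homomorphism preserving `⊔` and `⊓`. -/
def LuRingHom (S T : LuRing.{u}) (f : S.R → T.R) : Prop :=
  (∀ x y, f (x + y) = f x + f y) ∧ (∀ x y, f (x * y) = f x * f y) ∧ f 1 = 1 ∧
  (∀ x y, f (x ⊔ y) = f x ⊔ f y) ∧ (∀ x y, f (x ⊓ y) = f x ⊓ f y)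

/-- An ℓu-group morphism from `(G, u)` to an ℓu-ring `(R, 1)`: a group homomorphism
preserving `⊔` and `⊓` and sending `u` to `1`. -/
def LuGroupRingHom (L : LuGroup.{u}) (S : LuRing.{u}) (f : L.G → S.R) : Prop :=
  (∀ x y, f (x + y) = f x + f y) ∧ (∀ x y, f (x ⊔ y) = f x ⊔ f y) ∧
  (∀ x y, f (x ⊓ y) = f x ⊓ f y) ∧ f L.u = 1

/-!
The ring is the free Archimedean unital ℓu-ring on `(G, u)`: inside the product of all Archimedean
unital ℓu-rings `T` equipped with an ℓu-morphism `f : G → T`, take the sub-ℓ-ring generated by the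
tuples `(f a)_(T, f)`. Projections give the universal property; the product is Archimedean, and `1`
is a strong unit on the generated part because a ring–lattice term in generators bounded by
multiples of `u` is bounded by a multiple of `1`. The product lies one universe up, but the
generated part is the image of a small term algebra, so it can be shrunk back.

Injectivity says that the ℓu-morphisms `G → ℝ` separate points (Yosida). Given `x > 0`, the
Archimedean property yields `n` with `n • x ≰ u`, and then the solid subgroup generated by
`(u - n • x)⁺` avoids `u`. A solid subgroup `M` maximal among those avoiding `u` is prime, and by
maximality and the strong unit `G ⧸ M` is a totally ordered Archimedean group in which `x` stays
positive. Hölder's embedding of `G ⧸ M` into `ℝ`, normalised at `u`, is the required morphism.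
-/

open LatticeOrderedAddCommGroup

section LatticeOrderedGroup

variable {α : Type*} [AddCommGroup α] [Lattice α] [AddLeftMono α] {a b c u x : α}

theorem add_inf_le_inf_add_inf (ha : 0 ≤ a) (hbc : 0 ≤ b ⊓ c) :
    (a + b) ⊓ c ≤ a ⊓ c + b ⊓ c := by
  have h₁ : (a + b) ⊓ c ≤ a + b ⊓ c := by
    rw [add_inf]
    exact inf_le_inf_left _ (le_add_of_nonneg_left ha)
  have h₂ : (a + b) ⊓ c ≤ c + b ⊓ c := inf_le_right.trans (le_add_of_nonneg_right hbc)
  calc (a + b) ⊓ c ≤ (a + b ⊓ c) ⊓ (c + b ⊓ c) := le_inf h₁ h₂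
    _ = a ⊓ c + b ⊓ c := (inf_add _ _ _).symm

theorem nsmul_inf_eq_zero (h : a ⊓ b = 0) (n : ℕ) : (n • a) ⊓ b = 0 := by
  have ha : 0 ≤ a := h ▸ inf_le_left
  have hb : 0 ≤ b := h ▸ inf_le_right
  induction n with
  | zero => simpa using hb
  | succ n ih =>
    refine le_antisymm ?_ (le_inf (nsmul_nonneg ha _) hb)
    calc ((n + 1) • a) ⊓ b ≤ (n • a) ⊓ b + a ⊓ b :=
          succ_nsmul a n ▸ add_inf_le_inf_add_inf (nsmul_nonneg ha n) (h.symm ▸ le_rfl)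
      _ = 0 := by rw [ih, h, add_zero]

theorem nsmul_inf_nsmul_eq_zero (h : a ⊓ b = 0) (m n : ℕ) : (m • a) ⊓ (n • b) = 0 := by
  have h' : b ⊓ m • a = 0 := by rw [inf_comm]; exact nsmul_inf_eq_zero h m
  rw [inf_comm]
  exact nsmul_inf_eq_zero h' n

theorem nonneg_of_negPart_le_nsmul_posPart {n : ℕ} (h : a⁻ ≤ n • a⁺) : 0 ≤ a := by
  rw [← negPart_eq_zero, ← inf_eq_left.2 h, inf_comm]
  exact nsmul_inf_eq_zero (posPart_inf_negPart_eq_zero a) n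

theorem LatticeOrderedAddCommGroup.IsSolid.mem_of_nonneg_of_le {s : Set α} (hs : IsSolid s)
    (hx : x ∈ s) (ha : 0 ≤ a) (hax : a ≤ x) : a ∈ s :=
  hs hx (by rw [abs_of_nonneg ha, abs_of_nonneg (ha.trans hax)]; exact hax)

namespace AddMonoidHom

variable {β : Type*} [AddCommGroup β] [Lattice β] [AddLeftMono β] (φ : α →+ β)
  (hφ : ∀ a b, φ (a ⊔ b) = φ a ⊔ φ b)
include hφ

omit [AddLeftMono α] [AddLeftMono β] in
theorem monotone_of_map_sup : Monotone φ := fun a b hab => by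
  rw [← sup_eq_right.2 hab, hφ]
  exact le_sup_left

omit [AddLeftMono α] [AddLeftMono β] in
theorem map_abs_of_map_sup (a : α) : φ |a| = |φ a| := by
  simp only [abs, hφ, map_neg]

theorem map_inf_of_map_sup (a b : α) : φ (a ⊓ b) = φ a ⊓ φ b := by
  rw [← add_left_inj (φ (a ⊔ b)), ← map_add, inf_add_sup, map_add, hφ, inf_add_sup]

end AddMonoidHom

namespace AddSubgroup

variable (M : AddSubgroup α) (p : α)

def solidJoin : AddSubgroup α where
  carrier := {z | ∃ m ∈ M, 0 ≤ m ∧ ∃ k : ℕ, |z| ≤ m + k • |p|}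
  zero_mem' := ⟨0, M.zero_mem, le_rfl, 0, by simp⟩
  add_mem' := by
    rintro a b ⟨m, hm, hm0, k, hk⟩ ⟨m', hm', hm'0, k', hk'⟩
    refine ⟨m + m', M.add_mem hm hm', add_nonneg hm0 hm'0, k + k', ?_⟩
    calc |a + b| ≤ |a| + |b| := abs_add_le a b
      _ ≤ (m + k • |p|) + (m' + k' • |p|) := add_le_add hk hk'
      _ = (m + m') + (k + k') • |p| := by rw [add_nsmul]; abel
  neg_mem' := by
    rintro a ⟨m, hm, hm0, k, hk⟩
    exact ⟨m, hm, hm0, k, by rwa [abs_neg]⟩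

variable {M p}

theorem isSolid_solidJoin : IsSolid (M.solidJoin p : Set α) := by
  rintro a ⟨m, hm, hm0, k, hk⟩ b hba
  exact ⟨m, hm, hm0, k, hba.trans hk⟩

theorem mem_solidJoin_self : p ∈ M.solidJoin p :=
  ⟨0, M.zero_mem, le_rfl, 1, by simp⟩

theorem le_solidJoin (hM : IsSolid (M : Set α)) : M ≤ M.solidJoin p := fun z hz =>
  ⟨|z|, hM hz (abs_abs z).le, abs_nonneg z, 0, by simp⟩

theorem mem_bot_solidJoin_iff {z : α} :
    z ∈ (⊥ : AddSubgroup α).solidJoin p ↔ ∃ k : ℕ, |z| ≤ k • |p| := by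
  constructor
  · rintro ⟨m, hm, -, k, hk⟩
    rw [mem_bot.1 hm, zero_add] at hk
    exact ⟨k, hk⟩
  · rintro ⟨k, hk⟩
    exact ⟨0, zero_mem _, le_rfl, k, by rwa [zero_add]⟩

variable (u) in
/-- In ℓ-group theory such an `M` is called a *value* of `u`. -/
abbrev IsValue (M : AddSubgroup α) : Prop :=
  Maximal (fun N : AddSubgroup α => IsSolid (N : Set α) ∧ u ∉ N) M

omit [AddLeftMono α] in
theorem exists_isValue_le {I : AddSubgroup α} (hI : IsSolid (I : Set α)) (hu : u ∉ I) :
    ∃ M, I ≤ M ∧ M.IsValue u := by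
  refine zorn_le_nonempty₀ _ (fun c hc hchain N hN => ?_) I ⟨hI, hu⟩
  have hmem {z : α} : z ∈ sSup c ↔ ∃ N ∈ c, z ∈ N :=
    mem_sSup_of_directedOn ⟨N, hN⟩ hchain.directedOn
  refine ⟨sSup c, ⟨fun a ha b hb => ?_, fun hu' => ?_⟩, fun N hN => le_sSup hN⟩
  · obtain ⟨N, hN, ha⟩ := hmem.1 ha
    exact hmem.2 ⟨N, hN, (hc hN).1 ha hb⟩
  · obtain ⟨N, hN, hu'⟩ := hmem.1 hu'
    exact (hc hN).2 hu'

variable {M : AddSubgroup α}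

theorem IsValue.exists_le_add_nsmul (hM : M.IsValue u) (hu : 0 ≤ u) (hp : 0 ≤ p) (hpM : p ∉ M) :
    ∃ m ∈ M, 0 ≤ m ∧ ∃ k : ℕ, u ≤ m + k • p := by
  have hu' : u ∈ M.solidJoin p := by
    by_contra hu'
    exact hpM (hM.2 ⟨isSolid_solidJoin, hu'⟩ (le_solidJoin hM.1.1) mem_solidJoin_self)
  obtain ⟨m, hm, hm0, k, hk⟩ := hu'
  rw [abs_of_nonneg hu, abs_of_nonneg hp] at hk
  exact ⟨m, hm, hm0, k, hk⟩

theorem IsValue.posPart_mem_or_negPart_mem (hM : M.IsValue u) (hu : 0 ≤ u) (a : α) :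
    a⁺ ∈ M ∨ a⁻ ∈ M := by
  by_contra! h
  obtain ⟨m, hm, hm0, k, hk⟩ := hM.exists_le_add_nsmul hu (posPart_nonneg a) h.1
  obtain ⟨m', hm', hm'0, k', hk'⟩ := hM.exists_le_add_nsmul hu (negPart_nonneg a) h.2
  have hle : u ≤ m + m' := calc
    u ≤ (m + m' + k • a⁺) ⊓ (m + m' + k' • a⁻) :=
      le_inf (hk.trans (by gcongr; exact le_add_of_nonneg_right hm'0))
        (hk'.trans (by gcongr; exact le_add_of_nonneg_left hm0))
    _ = m + m' := by
      rw [← add_inf, nsmul_inf_nsmul_eq_zero (posPart_inf_negPart_eq_zero a), add_zero]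
  exact hM.1.2 (IsSolid.mem_of_nonneg_of_le hM.1.1 (M.add_mem hm hm') hu hle)

end AddSubgroup

namespace QuotientAddGroup

variable {M : AddSubgroup α} {a : α}

theorem mk_negPart_eq_neg_mk (h : a⁺ ∈ M) : ((a⁻ : α) : α ⧸ M) = -↑a := by
  have : a + a⁻ = a⁺ := by rw [← eq_sub_iff_add_eq, posPart_sub_negPart]
  rwa [← mk_neg, eq_iff_sub_mem, sub_neg_eq_add, add_comm, this]

theorem mk_posPart_eq_mk (h : a⁻ ∈ M) : ((a⁺ : α) : α ⧸ M) = ↑a := by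
  have : a⁺ - a = a⁻ := by rw [sub_eq_iff_eq_add', ← sub_eq_iff_eq_add, posPart_sub_negPart]
  rwa [eq_iff_sub_mem, this]

end QuotientAddGroup

namespace AddSubgroup

class IsPrimeSolid (M : AddSubgroup α) : Prop where
  isSolid : IsSolid (M : Set α)
  posPart_mem_or_negPart_mem (a : α) : a⁺ ∈ M ∨ a⁻ ∈ M

variable (M : AddSubgroup α) [M.IsPrimeSolid]

def quotientCone : AddGroupCone (α ⧸ M) where
  toAddSubmonoid := (AddSubmonoid.nonneg α).map (QuotientAddGroup.mk' M)
  eq_zero_of_mem_of_neg_mem' := by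
    rintro _ ⟨a, ha, rfl⟩ ⟨b, hb, hab⟩
    have hsum : a + b ∈ M := by
      rw [← QuotientAddGroup.eq_zero_iff, QuotientAddGroup.mk_add]
      simp_all
    have haM : a ∈ M := IsSolid.mem_of_nonneg_of_le IsPrimeSolid.isSolid hsum ha
      (le_add_of_nonneg_right hb)
    simpa using haM

instance : HasMemOrNegMem (quotientCone M) where
  mem_or_neg_mem A := by
    induction A using QuotientAddGroup.induction_on with | H a => ?_
    rcases IsPrimeSolid.posPart_mem_or_negPart_mem (M := M) a with h | h
    · exact Or.inr ⟨a⁻, negPart_nonneg a, QuotientAddGroup.mk_negPart_eq_neg_mk h⟩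
    · exact Or.inl ⟨a⁺, posPart_nonneg a, QuotientAddGroup.mk_posPart_eq_mk h⟩

noncomputable instance : LinearOrder (α ⧸ M) := by
  classical exact LinearOrder.mkOfAddGroupCone (quotientCone M)

instance : IsOrderedAddMonoid (α ⧸ M) := IsOrderedAddMonoid.mkOfCone (quotientCone M)

end AddSubgroup

namespace QuotientAddGroup

variable {M : AddSubgroup α} [M.IsPrimeSolid] {a b : α}

theorem nonneg_iff_mem_quotientCone {A : α ⧸ M} : 0 ≤ A ↔ A ∈ M.quotientCone := by
  change A - 0 ∈ _ ↔ _
  rw [sub_zero]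

theorem monotone_mk : Monotone (QuotientAddGroup.mk : α → α ⧸ M) := fun a b hab => by
  show (b : α ⧸ M) - a ∈ M.quotientCone
  exact ⟨b - a, sub_nonneg.2 hab, rfl⟩

theorem mk_pos (ha : 0 ≤ a) (haM : a ∉ M) : 0 < (a : α ⧸ M) :=
  (monotone_mk ha).lt_of_ne' fun h => haM ((eq_zero_iff a).1 h)

theorem mk_posPart (a : α) : ((a⁺ : α) : α ⧸ M) = (a : α ⧸ M)⁺ := by
  rcases AddSubgroup.IsPrimeSolid.posPart_mem_or_negPart_mem (M := M) a with h | h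
  · rw [(eq_zero_iff _).2 h, eq_comm, posPart_eq_zero, ← neg_nonneg, ← mk_negPart_eq_neg_mk h]
    exact monotone_mk (negPart_nonneg a)
  · rw [mk_posPart_eq_mk h, eq_comm, posPart_eq_self, ← mk_posPart_eq_mk h]
    exact monotone_mk (posPart_nonneg a)

theorem mk_sup (a b : α) : ((a ⊔ b : α) : α ⧸ M) = (a : α ⧸ M) ⊔ (b : α ⧸ M) := by
  rw [sup_eq_add_posPart_sub, sup_eq_add_posPart_sub (a : α ⧸ M), mk_add, mk_posPart, mk_sub]

end QuotientAddGroup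

namespace AddSubgroup

variable {M : AddSubgroup α}

theorem IsValue.isPrimeSolid (hM : M.IsValue u) (hu : 0 ≤ u) : M.IsPrimeSolid :=
  ⟨hM.1.1, hM.posPart_mem_or_negPart_mem hu⟩

theorem IsValue.archimedean_quotient [M.IsPrimeSolid] (hM : M.IsValue u) (hu : 0 ≤ u)
    (hstrong : ∀ a : α, ∃ n : ℕ, a ≤ n • u) : Archimedean (α ⧸ M) := by
  refine ⟨fun A B hB => ?_⟩
  induction A using QuotientAddGroup.induction_on with | H a => ?_
  obtain ⟨b, hb, rfl⟩ := QuotientAddGroup.nonneg_iff_mem_quotientCone.1 hB.le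
  have hbM : b ∉ M := fun hbM => hB.ne' ((QuotientAddGroup.eq_zero_iff b).2 hbM)
  obtain ⟨m, hm, -, k, hk⟩ := hM.exists_le_add_nsmul hu hb hbM
  obtain ⟨n, hn⟩ := hstrong a
  refine ⟨n * k, ?_⟩
  calc (a : α ⧸ M) ≤ ↑(n • (m + k • b)) :=
        QuotientAddGroup.monotone_mk (hn.trans (nsmul_le_nsmul_right hk n))
    _ = (n * k) • QuotientAddGroup.mk' M b := by
        simp [mul_nsmul', (QuotientAddGroup.eq_zero_iff m).2 hm]

theorem IsValue.exists_addMonoidHom_real (hM : M.IsValue u) (hu : 0 ≤ u)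
    (hstrong : ∀ a : α, ∃ n : ℕ, a ≤ n • u) (hx : 0 ≤ x) (hxM : x ∉ M) :
    ∃ φ : α →+ ℝ, (∀ a b, φ (a ⊔ b) = φ a ⊔ φ b) ∧ φ u = 1 ∧ 0 < φ x := by
  have := hM.isPrimeSolid hu
  have := hM.archimedean_quotient hu hstrong
  obtain ⟨f, hf⟩ := Archimedean.exists_orderAddMonoidHom_real_injective (α ⧸ M)
  have hfmono : StrictMono f := f.monotone'.strictMono_of_injective hf
  set c := f (u : α ⧸ M)
  have hc : 0 < c := by simpa using hfmono (QuotientAddGroup.mk_pos hu hM.1.2)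
  refine ⟨c⁻¹ • (f.toAddMonoidHom.comp (QuotientAddGroup.mk' M)), fun a b => ?_, ?_, ?_⟩
  · simp [QuotientAddGroup.mk_sup, hfmono.monotone.map_max,
      mul_max_of_nonneg _ _ (inv_nonneg.2 hc.le)]
  · simp [c, hc.ne']
  · simpa using mul_pos (inv_pos.2 hc) (by simpa using hfmono (QuotientAddGroup.mk_pos hx hxM))

end AddSubgroup

theorem exists_addMonoidHom_real_pos (hu : 0 ≤ u) (hstrong : ∀ a : α, ∃ n : ℕ, a ≤ n • u)
    (harch : ∀ a b : α, (∀ n : ℕ, n • a ≤ b) → a ≤ 0) (hx : 0 < x) :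
    ∃ φ : α →+ ℝ, (∀ a b, φ (a ⊔ b) = φ a ⊔ φ b) ∧ φ u = 1 ∧ 0 < φ x := by
  obtain ⟨n, hn⟩ : ∃ n : ℕ, ¬ n • x ≤ u := by
    by_contra! h
    exact hx.not_ge (harch x u h)
  set y := (u - n • x)⁺
  have hyu : u ∉ (⊥ : AddSubgroup α).solidJoin y := by
    rw [AddSubgroup.mem_bot_solidJoin_iff, abs_of_nonneg (posPart_nonneg _), abs_of_nonneg hu]
    rintro ⟨k, hk⟩
    obtain ⟨m, hm⟩ := hstrong (n • x)
    refine hn (sub_nonneg.1 (nonneg_of_negPart_le_nsmul_posPart (n := m * k) ?_))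
    calc (u - n • x)⁻ ≤ n • x :=
          sup_le (by rw [neg_sub]; exact sub_le_self _ hu) (nsmul_nonneg hx.le n)
      _ ≤ m • u := hm
      _ ≤ m • (k • y) := nsmul_le_nsmul_right hk m
      _ = (m * k) • (u - n • x)⁺ := (mul_nsmul' _ _ _).symm
  obtain ⟨M, hyM, hM⟩ := AddSubgroup.exists_isValue_le AddSubgroup.isSolid_solidJoin hyu
  have hxM : x ∉ M := fun hxM => hM.1.2 <|
    IsSolid.mem_of_nonneg_of_le hM.1.1
      (M.add_mem (hyM AddSubgroup.mem_solidJoin_self) (M.nsmul_mem hxM n)) hu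
      (sub_le_iff_le_add.1 (le_posPart (u - n • x)))
  exact hM.exists_addMonoidHom_real hu hstrong hx.le hxM

theorem exists_addMonoidHom_real_ne (hu : 0 ≤ u) (hstrong : ∀ a : α, ∃ n : ℕ, a ≤ n • u)
    (harch : ∀ a b : α, (∀ n : ℕ, n • a ≤ b) → a ≤ 0) (hab : a ≠ b) :
    ∃ φ : α →+ ℝ, (∀ a b, φ (a ⊔ b) = φ a ⊔ φ b) ∧ φ u = 1 ∧ φ a ≠ φ b := by
  have hpos : 0 < |a - b| := (abs_nonneg _).lt_of_ne' fun h => hab <| sub_eq_zero.1 <|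
    le_antisymm (h ▸ le_abs_self _) (neg_nonpos.1 (h ▸ neg_le_abs _))
  obtain ⟨φ, hsup, hu, hφ⟩ := exists_addMonoidHom_real_pos hu hstrong harch hpos
  refine ⟨φ, hsup, hu, fun h => ?_⟩
  rw [φ.map_abs_of_map_sup hsup, map_sub, h, sub_self, abs_zero] at hφ
  exact hφ.false

end LatticeOrderedGroup

section LatticeOrderedRing

variable {R : Type*} [CommRing R] [Lattice R] [IsOrderedRing R] {a b c p q : R}

theorem mul_le_mul_of_abs_le (ha : |a| ≤ p) (hb : |b| ≤ q) : a * b ≤ p * q := by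
  obtain ⟨ha₁, ha₂⟩ := abs_le'.1 ha
  obtain ⟨hb₁, hb₂⟩ := abs_le'.1 hb
  have h₁ : 0 ≤ (p - a) * (q + b) :=
    mul_nonneg (sub_nonneg.2 ha₁) (by rwa [add_comm, ← neg_le_iff_add_nonneg'])
  have h₂ : 0 ≤ (p + a) * (q - b) :=
    mul_nonneg (by rwa [add_comm, ← neg_le_iff_add_nonneg']) (sub_nonneg.2 hb₁)
  have h : 0 ≤ 2 • (p * q - a * b) := by
    convert add_nonneg h₁ h₂ using 1
    rw [two_nsmul]; ring
  exact sub_nonneg.1 (nsmul_two_semiclosed h)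

theorem abs_mul_le_of_abs_le (ha : |a| ≤ p) (hb : |b| ≤ q) : |a * b| ≤ p * q :=
  abs_le'.2 ⟨mul_le_mul_of_abs_le ha hb,
    neg_mul a b ▸ mul_le_mul_of_abs_le (by rwa [abs_neg]) hb⟩

theorem abs_sup_le_of_abs_le (ha : |a| ≤ c) (hb : |b| ≤ c) : |a ⊔ b| ≤ c :=
  abs_le'.2 ⟨sup_le (abs_le'.1 ha).1 (abs_le'.1 hb).1,
    neg_sup a b ▸ inf_le_left.trans (abs_le'.1 ha).2⟩

theorem abs_inf_le_of_abs_le (ha : |a| ≤ c) (hb : |b| ≤ c) : |a ⊓ b| ≤ c :=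
  abs_le'.2 ⟨inf_le_left.trans (abs_le'.1 ha).1,
    neg_inf a b ▸ sup_le (abs_le'.1 ha).2 (abs_le'.1 hb).2⟩

end LatticeOrderedRing

inductive LuTerm (α : Type*)
  | of : α → LuTerm α
  | zero : LuTerm α
  | one : LuTerm α
  | add : LuTerm α → LuTerm α → LuTerm α
  | neg : LuTerm α → LuTerm α
  | mul : LuTerm α → LuTerm α → LuTerm α
  | sup : LuTerm α → LuTerm α → LuTerm α
  | inf : LuTerm α → LuTerm α → LuTerm α

namespace LuTerm

variable {α R : Type*} [CommRing R] [Lattice R] (f : α → R)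

def eval : LuTerm α → R
  | of a => f a
  | zero => 0
  | one => 1
  | add t s => t.eval + s.eval
  | neg t => -t.eval
  | mul t s => t.eval * s.eval
  | sup t s => t.eval ⊔ s.eval
  | inf t s => t.eval ⊓ s.eval

def evalSubring : Subring R where
  carrier := Set.range (eval f)
  zero_mem' := ⟨zero, rfl⟩
  one_mem' := ⟨one, rfl⟩
  add_mem' := by rintro _ _ ⟨t, rfl⟩ ⟨s, rfl⟩; exact ⟨add t s, rfl⟩
  neg_mem' := by rintro _ ⟨t, rfl⟩; exact ⟨neg t, rfl⟩
  mul_mem' := by rintro _ _ ⟨t, rfl⟩ ⟨s, rfl⟩; exact ⟨mul t s, rfl⟩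

theorem sup_mem_evalSubring ⦃x y : R⦄ :
    x ∈ evalSubring f → y ∈ evalSubring f → x ⊔ y ∈ evalSubring f := by
  rintro ⟨t, rfl⟩ ⟨s, rfl⟩; exact ⟨sup t s, rfl⟩

theorem inf_mem_evalSubring ⦃x y : R⦄ :
    x ∈ evalSubring f → y ∈ evalSubring f → x ⊓ y ∈ evalSubring f := by
  rintro ⟨t, rfl⟩ ⟨s, rfl⟩; exact ⟨inf t s, rfl⟩

instance : Lattice (evalSubring f) :=
  Subtype.lattice (sup_mem_evalSubring f) (inf_mem_evalSubring f)

instance {α : Type u} (f : α → R) : Small.{u} (evalSubring f) := small_range (eval f)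

variable {f} [IsOrderedRing R]

theorem exists_abs_eval_le (hf : ∀ a, ∃ n : ℕ, |f a| ≤ n) :
    ∀ t : LuTerm α, ∃ n : ℕ, |t.eval f| ≤ n
  | of a => hf a
  | zero => ⟨0, by simp [eval]⟩
  | one => ⟨1, by rw [eval, Nat.cast_one, abs_of_nonneg zero_le_one]⟩
  | add t s => by
    obtain ⟨n, hn⟩ := exists_abs_eval_le hf t
    obtain ⟨m, hm⟩ := exists_abs_eval_le hf s
    exact ⟨n + m, by push_cast; exact (abs_add_le _ _).trans (add_le_add hn hm)⟩
  | neg t => by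
    obtain ⟨n, hn⟩ := exists_abs_eval_le hf t
    exact ⟨n, by rwa [eval, abs_neg]⟩
  | mul t s => by
    obtain ⟨n, hn⟩ := exists_abs_eval_le hf t
    obtain ⟨m, hm⟩ := exists_abs_eval_le hf s
    exact ⟨n * m, by push_cast; exact abs_mul_le_of_abs_le hn hm⟩
  | sup t s => by
    obtain ⟨n, hn⟩ := exists_abs_eval_le hf t
    obtain ⟨m, hm⟩ := exists_abs_eval_le hf s
    exact ⟨n + m, abs_sup_le_of_abs_le (hn.trans (by simp)) (hm.trans (by simp))⟩
  | inf t s => by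
    obtain ⟨n, hn⟩ := exists_abs_eval_le hf t
    obtain ⟨m, hm⟩ := exists_abs_eval_le hf s
    exact ⟨n + m, abs_inf_le_of_abs_le (hn.trans (by simp)) (hm.trans (by simp))⟩

end LuTerm

universe v

instance (L : LuGroup.{u}) : IsOrderedAddMonoid L.G where
  add_le_add_left a b h c := by simpa only [add_comm _ c] using L.add_le_add a b c h

namespace LuRing

instance (T : LuRing.{u}) : IsOrderedAddMonoid T.R where
  add_le_add_left a b h c := by simpa only [add_comm _ c] using T.add_le_add a b c h

instance (T : LuRing.{u}) : ZeroLEOneClass T.R := ⟨T.one_nonneg⟩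

instance (T : LuRing.{u}) : IsOrderedRing T.R := .of_mul_nonneg T.mul_nonneg

variable (T : LuRing.{v}) {X : Type u} (e : X ≃ T.R)

def ofEquiv : LuRing.{u} :=
  letI : CommRing X := e.commRing
  letI : Max X := ⟨fun a b => e.symm (e a ⊔ e b)⟩
  letI : Min X := ⟨fun a b => e.symm (e a ⊓ e b)⟩
  letI : LE X := ⟨fun a b => e a ≤ e b⟩
  letI : LT X := ⟨fun a b => e a < e b⟩
  have hadd (a b : X) : e (a + b) = e a + e b := map_add e.ringEquiv a b
  have hmul (a b : X) : e (a * b) = e a * e b := map_mul e.ringEquiv a b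
  have hzero : e 0 = 0 := map_zero e.ringEquiv
  have hone : e 1 = 1 := map_one e.ringEquiv
  have hnsmul (n : ℕ) (a : X) : e (n • a) = n • e a := map_nsmul e.ringEquiv n a
  { R := X
    lat := e.injective.lattice _ Iff.rfl Iff.rfl (fun _ _ => e.apply_symm_apply _)
      (fun _ _ => e.apply_symm_apply _)
    add_le_add := fun a b c h => by
      show e (c + a) ≤ e (c + b)
      rw [hadd, hadd]
      exact T.add_le_add _ _ _ h
    one_nonneg := by
      show e 0 ≤ e 1
      rw [hzero, hone]
      exact T.one_nonneg
    one_strong := fun a => by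
      obtain ⟨n, hn⟩ := T.one_strong (e a)
      refine ⟨n, ?_⟩
      show e a ≤ e (n • 1)
      rwa [hnsmul, hone]
    mul_nonneg := fun a b ha hb => by
      change e 0 ≤ e a at ha
      change e 0 ≤ e b at hb
      show e 0 ≤ e (a * b)
      rw [hzero] at ha hb ⊢
      rw [hmul]
      exact T.mul_nonneg _ _ ha hb
    f_ring := fun a b c h hc => by
      change e 0 ≤ e c at hc
      have h' : e (e.symm (e a ⊓ e b)) = e 0 := congrArg e h
      rw [e.apply_symm_apply, hzero] at h'
      apply e.injective
      show e (e.symm (e (c * a) ⊓ e b)) = e 0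
      rw [e.apply_symm_apply, hmul, hzero]
      exact T.f_ring _ _ _ h' (hzero ▸ hc) }

def ofEquivIso : (T.ofEquiv e).R ≃+*o T.R where
  toEquiv := e
  map_add' _ _ := e.apply_symm_apply _
  map_mul' _ _ := e.apply_symm_apply _
  map_le_map_iff' := Iff.rfl

variable {T e}

theorem arch_ofEquiv (hT : T.Arch) : (T.ofEquiv e).Arch := fun x y h => by
  rw [← map_le_map_iff (T.ofEquivIso e), map_zero]
  refine hT _ (T.ofEquivIso e y) fun n => ?_
  rw [← map_nsmul]
  exact (map_le_map_iff _).2 (h n)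

theorem luGroupRingHom_ofEquivIso_symm_comp {L : LuGroup.{u}} {f : L.G → T.R}
    (hadd : ∀ x y, f (x + y) = f x + f y)
    (hsup : ∀ x y, f (x ⊔ y) = f x ⊔ f y) (hinf : ∀ x y, f (x ⊓ y) = f x ⊓ f y)
    (hu : f L.u = 1) :
    LuGroupRingHom L (T.ofEquiv e) ((T.ofEquivIso e).symm ∘ f) :=
  ⟨fun x y => by simp [hadd], fun x y => by simp [hsup], fun x y => by simp [hinf],
    by simp [hu]⟩

theorem luRingHom_comp_ofEquivIso {S : LuRing.{u}} {g : T.R → S.R}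
    (hadd : ∀ x y, g (x + y) = g x + g y) (hmul : ∀ x y, g (x * y) = g x * g y) (hone : g 1 = 1)
    (hsup : ∀ x y, g (x ⊔ y) = g x ⊔ g y) (hinf : ∀ x y, g (x ⊓ y) = g x ⊓ g y) :
    LuRingHom (T.ofEquiv e) S (g ∘ T.ofEquivIso e) :=
  ⟨fun x y => by simp [hadd], fun x y => by simp [hmul], by simp [hone],
    fun x y => by simp [hsup], fun x y => by simp [hinf]⟩

noncomputable def real : LuRing.{0} where
  R := ℝ
  add_le_add _ _ c h := add_le_add_right h c
  one_nonneg := zero_le_one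
  one_strong x := ⟨⌈x⌉₊, by simpa using Nat.le_ceil x⟩
  mul_nonneg _ _ := _root_.mul_nonneg
  f_ring x y z h hz := by
    rcases min_eq_iff.1 h with ⟨rfl, hy⟩ | ⟨rfl, hx⟩
    · simpa using hy
    · exact min_eq_right (_root_.mul_nonneg hz hx)

theorem real_arch : real.Arch := fun (x y : ℝ) h => by
  show x ≤ 0
  by_contra! hx
  obtain ⟨n, hn⟩ := exists_lt_nsmul hx y
  exact (h n).not_gt hn

noncomputable def realULift : LuRing.{u} := LuRing.real.ofEquiv Equiv.ulift

end LuRing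

namespace LuGroupRingHom

variable {L : LuGroup.{u}} {T : LuRing.{u}} {f : L.G → T.R}

theorem abs_le_of_abs_le_nsmul (hf : LuGroupRingHom L T f) {a : L.G} {n : ℕ}
    (h : |a| ≤ n • L.u) : |f a| ≤ n := by
  let φ : L.G →+ T.R := AddMonoidHom.mk' f hf.1
  have hφ : ∀ x y, φ (x ⊔ y) = φ x ⊔ φ y := hf.2.1
  calc |f a| = φ |a| := (φ.map_abs_of_map_sup hφ a).symm
    _ ≤ φ (n • L.u) := φ.monotone_of_map_sup hφ h
    _ = n • φ L.u := map_nsmul φ n L.u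
    _ = n := by rw [show φ L.u = 1 from hf.2.2.2, nsmul_one]

end LuGroupRingHom

namespace FreeLuRing

variable (L : LuGroup.{u})

structure Model : Type (u + 1) where
  T : LuRing.{u}
  arch : T.Arch
  f : L.G → T.R
  hom : LuGroupRingHom L T f

def gen (a : L.G) : (M : Model L) → M.T.R := fun M => M.f a

theorem exists_abs_gen_le (a : L.G) : ∃ n : ℕ, |gen L a| ≤ n := by
  obtain ⟨n, hn⟩ := L.u_strong |a|
  exact ⟨n, fun M => M.hom.abs_le_of_abs_le_nsmul hn⟩

noncomputable def large : LuRing.{u + 1} where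
  R := LuTerm.evalSubring (gen L)
  add_le_add _ _ c h := add_le_add_right (α := (M : Model L) → M.T.R) h c
  one_nonneg := zero_le_one (α := (M : Model L) → M.T.R)
  one_strong := by
    rintro ⟨_, t, rfl⟩
    obtain ⟨n, hn⟩ := LuTerm.exists_abs_eval_le (exists_abs_gen_le L) t
    refine ⟨n, ?_⟩
    rw [← Subtype.coe_le_coe]
    simpa [nsmul_one] using (le_abs_self _).trans hn
  mul_nonneg _ _ := _root_.mul_nonneg (α := (M : Model L) → M.T.R)
  f_ring x y z h hz := Subtype.ext <| funext fun M =>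
    M.T.f_ring _ _ _ (congrFun (congrArg Subtype.val h) M) (hz M)

theorem large_arch : (large L).Arch := fun _ _ h M => M.arch _ _ fun n => h n M

def largeGen (a : L.G) : (large L).R := ⟨gen L a, .of a, rfl⟩

theorem largeGen_injective (hL : L.Arch) : Function.Injective (largeGen L) := by
  intro a b h
  by_contra hab
  obtain ⟨φ, hsup, hu, hne⟩ := exists_addMonoidHom_real_ne L.u_nonneg L.u_strong hL hab
  let M : Model L := ⟨LuRing.realULift, LuRing.arch_ofEquiv LuRing.real_arch, _,
    LuRing.luGroupRingHom_ofEquivIso_symm_comp (f := φ) (map_add φ) hsup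
      (φ.map_inf_of_map_sup hsup) hu⟩
  exact hne ((LuRing.real.ofEquivIso Equiv.ulift).symm.injective
    (congrFun (congrArg Subtype.val h) M))

end FreeLuRing

noncomputable def freeLuRing (L : LuGroup.{u}) : LuRing.{u} :=
  (FreeLuRing.large L).ofEquiv (equivShrink.{u} (LuTerm.evalSubring (FreeLuRing.gen L))).symm

namespace FreeLuRing

variable (L : LuGroup.{u})

theorem arch : (freeLuRing L).Arch := LuRing.arch_ofEquiv (large_arch L)

noncomputable def of : L.G → (freeLuRing L).R := (LuRing.ofEquivIso _ _).symm ∘ largeGen L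

theorem of_hom : LuGroupRingHom L (freeLuRing L) (of L) :=
  LuRing.luGroupRingHom_ofEquivIso_symm_comp
    (fun x y => Subtype.ext <| funext fun M => M.hom.1 x y)
    (fun x y => Subtype.ext <| funext fun M => M.hom.2.1 x y)
    (fun x y => Subtype.ext <| funext fun M => M.hom.2.2.1 x y)
    (Subtype.ext <| funext fun M => M.hom.2.2.2)

theorem of_injective (hL : L.Arch) : Function.Injective (of L) :=
  (LuRing.ofEquivIso _ _).symm.injective.comp (largeGen_injective L hL)

variable {L} (M : Model L)

noncomputable def lift : (freeLuRing L).R → M.T.R := (fun x => x.1 M) ∘ LuRing.ofEquivIso _ _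

theorem lift_hom : LuRingHom (freeLuRing L) M.T (lift M) :=
  LuRing.luRingHom_comp_ofEquivIso (fun _ _ => rfl) (fun _ _ => rfl) rfl (fun _ _ => rfl)
    (fun _ _ => rfl)

theorem lift_comp_of : lift M ∘ of L = M.f :=
  funext fun _ => congrFun (congrArg Subtype.val (OrderRingIso.apply_symm_apply _ _)) M

end FreeLuRing

/-- every Archimedean ℓu-group embeds into a unital Archimedean ℓu-ring,
universally with respect to ℓu-group morphisms into unital Archimedean ℓu-rings. -/
theorem stmt13 (L : LuGroup.{u}) (hL : L.Arch) :
    ∃ (R : LuRing.{u}) (ε : L.G → R.R),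
      R.Arch ∧ LuGroupRingHom L R ε ∧ Function.Injective ε ∧
      ∀ (T : LuRing.{u}), T.Arch → ∀ f : L.G → T.R, LuGroupRingHom L T f →
        ∃ g : R.R → T.R, LuRingHom R T g ∧ g ∘ ε = f :=
  ⟨freeLuRing L, FreeLuRing.of L, FreeLuRing.arch L, FreeLuRing.of_hom L,
    FreeLuRing.of_injective L hL, fun T hT f hf =>
      ⟨FreeLuRing.lift ⟨T, hT, f, hf⟩, FreeLuRing.lift_hom _, FreeLuRing.lift_comp_of _⟩⟩
end
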